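/- arXiv:1602.01963 — 5 statements merged into one kernel-verified Lean document; each statement's English description precedes it below -/
import Mathlib

section
/- Let G be a parity game with largest color d, let k ∈ {0,1} be the player with d ≡ k (mod 2), and let G'' = G↾(S \ Attr_{1−k}(G, A_{1−k}(G))) be the game obtained by removing the attractor for player 1−k of the winning core of player 1−k. Then the winning core of player k is unchanged: A_k(G) = A_k(G''). -/
/-- A parity game: an owner (player `0` or `1`) for each state, a total
transition relation `R` and a coloring `c` of the states. -/
structure ParityGame (S : Type) where
  owner : S → Fin 2
  R : S → S → Prop
  total : ∀ s, ∃ t, R s t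
  c : S → ℕ

namespace ParityGame

variable {S : Type}

/-- The value `e` occurs infinitely often in the sequence `π`. -/
def InfOften (π : ℕ → ℕ) (e : ℕ) : Prop := ∀ n, ∃ i, n ≤ i ∧ π i = e

/-- `π ∈ Ω_j` : `π` is bounded and the largest value occurring infinitely often
in `π` is congruent to `j` mod 2. -/
def InOmega (j : Fin 2) (π : ℕ → ℕ) : Prop :=
  (∃ k, ∀ i, π i ≤ k) ∧
  ∃ e, InfOften π e ∧ (∀ e', InfOften π e' → e' ≤ e) ∧ e % 2 = (j : ℕ)

/-- `π ∈ Λ_j` : `π ∈ Ω_j` and the largest non-initial entry of `π` is congruent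
to `j` mod 2. -/
def InLambda (j : Fin 2) (π : ℕ → ℕ) : Prop :=
  InOmega j π ∧ ∃ i, 1 ≤ i ∧ (∀ k, 1 ≤ k → π k ≤ π i) ∧ π i % 2 = (j : ℕ)

variable (G : ParityGame S)

/-- A play: an infinite sequence of states respecting the transition relation. -/
def IsPlay (ρ : ℕ → S) : Prop := ∀ i, G.R (ρ i) (ρ (i + 1))

/-- A strategy is modelled as a function from (past history, current state) to a
successor of the current state. -/
def IsStrategy (σ : List S → S → S) : Prop := ∀ h s, G.R s (σ h s)

/-- A play is compatible with a strategy `σ` of player `j` if at every state owned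
by `j` the play follows `σ` (applied to the history so far). -/
def Compatible (j : Fin 2) (σ : List S → S → S) (ρ : ℕ → S) : Prop :=
  ∀ i, G.owner (ρ i) = j → ρ (i + 1) = σ (List.ofFn fun k : Fin i => ρ k.val) (ρ i)

/-- A strategy is memoryless if it only depends on the current state. -/
def Memoryless (σ : List S → S → S) : Prop := ∀ h h' s, σ h s = σ h' s

/-- The color sequence of a play. -/
def colorSeq (ρ : ℕ → S) : ℕ → ℕ := fun i => G.c (ρ i)

/-- The segment `ρ_a ρ_{a+1} ... ρ_b` is `j`-dominating: it has at least one
transition and the largest color among its non-initial states is ≡ j (mod 2). -/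
def SegDom (j : Fin 2) (ρ : ℕ → S) (a b : ℕ) : Prop :=
  a < b ∧ ((Finset.Icc (a + 1) b).sup fun k => G.c (ρ k)) % 2 = (j : ℕ)

/-- The play `ρ` begins with an infinite number of consecutive `j`-dominating
sequences. -/
def BeginsInfDom (j : Fin 2) (ρ : ℕ → S) : Prop :=
  ∃ idx : ℕ → ℕ, idx 0 = 0 ∧ ∀ ℓ, G.SegDom j ρ (idx ℓ) (idx (ℓ + 1))

/-- The play `ρ` begins with (at least) `k` consecutive `j`-dominating sequences. -/
def BeginsKDom (j : Fin 2) (ρ : ℕ → S) (k : ℕ) : Prop :=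
  ∃ idx : ℕ → ℕ, idx 0 = 0 ∧ ∀ ℓ < k, G.SegDom j ρ (idx ℓ) (idx (ℓ + 1))

/-- The (infinite) play `ρ` is itself `j`-dominating : the largest color among
its non-initial states is ≡ j (mod 2). -/
def PlayDom (j : Fin 2) (ρ : ℕ → S) : Prop :=
  ∃ i, 1 ≤ i ∧ (∀ k, 1 ≤ k → G.c (ρ k) ≤ G.c (ρ i)) ∧ G.c (ρ i) % 2 = (j : ℕ)

/-- The winning region `W_j(G)` of player `j`. -/
def WinRegion (j : Fin 2) : Set S :=
  {s | ∃ σ, G.IsStrategy σ ∧ ∀ ρ, G.IsPlay ρ → ρ 0 = s → G.Compatible j σ ρ →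
    InOmega j (G.colorSeq ρ)}

/-- The winning core `A_j(G)` of player `j`. -/
def WinCore (j : Fin 2) : Set S :=
  {s | ∃ σ, G.IsStrategy σ ∧ ∀ ρ, G.IsPlay ρ → ρ 0 = s → G.Compatible j σ ρ →
    G.BeginsInfDom j ρ}

/-- `A^k_j(G)` : states from which player `j` can ensure that the play begins
with at least `k` consecutive `j`-dominating sequences. -/
def WinCoreK (j : Fin 2) (k : ℕ) : Set S :=
  {s | ∃ σ, G.IsStrategy σ ∧ ∀ ρ, G.IsPlay ρ → ρ 0 = s → G.Compatible j σ ρ →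
    G.BeginsKDom j ρ k}

/-- The restricted parity game `G ↾ T` (given that the restricted transition
relation is total). -/
def restrict (T : Set S) (h : ∀ s : T, ∃ t : T, G.R s.1 t.1) : ParityGame T where
  owner s := G.owner s.1
  R a b := G.R a.1 b.1
  total := h
  c s := G.c s.1

end ParityGame

/-- Membership in the attractor `Attr_j(G, T)` : the least set containing `T`,
closed under adding states from which player `j` controls reaching it. -/
inductive ParityGame.AttrRel {S : Type} (G : ParityGame S) (j : Fin 2) (T : Set S) : S → Prop
  | base {s} : s ∈ T → AttrRel G j T s
  | own {s t} : G.owner s = j → G.R s t → AttrRel G j T t → AttrRel G j T s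
  | opp {s} : G.owner s ≠ j → (∀ t, G.R s t → AttrRel G j T t) → AttrRel G j T s

namespace ParityGame

variable {S : Type} (G : ParityGame S)

/-- The attractor `Attr_j(G, T)` as a set. -/
def attractor (j : Fin 2) (T : Set S) : Set S := {s | AttrRel G j T s}

/-- The positive attractor `Attr⁺_j(G, T)`. -/
def posAttractor (j : Fin 2) (T : Set S) : Set S :=
  G.attractor j ({s | G.owner s = j ∧ ∃ t ∈ T, G.R s t} ∪
                 {s | G.owner s ≠ j ∧ ∀ t, G.R s t → t ∈ T})

/-- The product game `G†_j` over states `S × {0, ..., d}`. -/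
def prodGame (j : Fin 2) (d : ℕ) (hc : ∀ s, G.c s ≤ d) :
    ParityGame (S × Fin (d + 1)) where
  owner p := G.owner p.1
  R p q := G.R p.1 q.1 ∧ (q.2 : ℕ) = max (p.2 : ℕ) (G.c q.1)
  total p := by
    obtain ⟨t, ht⟩ := G.total p.1
    refine ⟨(t, ⟨max (p.2 : ℕ) (G.c t), ?_⟩), ht, rfl⟩
    exact Nat.lt_succ_iff.mpr (max_le (Nat.lt_succ_iff.mp p.2.isLt) (hc t))
  c p := if (p.2 : ℕ) % 2 = (j : ℕ) then G.c p.1 else (p.2 : ℕ)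

/-- `X` is a fatal attractor for player `j`: all states in `X` have the same
color `e ≡ j (mod 2)` and from every state of `X` player `j` can force the play
back to `X` without passing a color greater than `e`. -/
def FatalAttractor (j : Fin 2) (X : Set S) : Prop :=
  ∃ e, e % 2 = (j : ℕ) ∧ (∀ s ∈ X, G.c s = e) ∧
    ∀ s ∈ X, ∃ σ, G.IsStrategy σ ∧ ∀ ρ, G.IsPlay ρ → ρ 0 = s → G.Compatible j σ ρ →
      ∃ k, 0 < k ∧ ρ k ∈ X ∧ ∀ i, 0 < i → i ≤ k → G.c (ρ i) ≤ e

/-- `T` is `j`-closed: player `j` can force the play to stay in `T`. -/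
def JClosed (j : Fin 2) (T : Set S) : Prop :=
  (∀ s ∈ T, G.owner s ≠ j → ∀ t, G.R s t → t ∈ T) ∧
  (∀ s ∈ T, G.owner s = j → ∃ t ∈ T, G.R s t)

/-- The restriction of `G` to a `j`-closed set has a total transition relation. -/
theorem JClosed.totalOn {G : ParityGame S} {j : Fin 2} {T : Set S}
    (h : G.JClosed j T) : ∀ s : T, ∃ t : T, G.R s.1 t.1 := by
  rintro ⟨s, hs⟩
  by_cases hj : G.owner s = j
  · obtain ⟨t, ht, hrt⟩ := h.2 s hs hj
    exact ⟨⟨t, ht⟩, hrt⟩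
  · obtain ⟨t, hrt⟩ := G.total s
    exact ⟨⟨t, h.1 s hs hj t hrt⟩, hrt⟩

end ParityGame

namespace ParityGame

/-- The sequence `B^i_j(G)` of under-approximations of the winning core. -/
def Bset {S : Type} (G : ParityGame S) (j : Fin 2) : ℕ → Set S
  | 0 => Set.univ
  | i + 1 =>
    {s | s ∈ Bset G j i ∧ ∃ σ, G.IsStrategy σ ∧ ∀ ρ, G.IsPlay ρ → ρ 0 = s →
      G.Compatible j σ ρ → ∃ k, G.SegDom j ρ 0 k ∧ ρ k ∈ Bset G j i}

open Classical in
/-- Rank of a color sequence according to the order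
`Λ₁ ◁ Ω₁ \ Λ₁ ◁ Ω₀ \ Λ₀ ◁ Λ₀`; the preference relation `≤₀` of player 0
compares these ranks. -/
noncomputable def prefRank (π : ℕ → ℕ) : ℕ :=
  if InLambda 0 π then 3
  else if InOmega 0 π then 2
  else if InLambda 1 π then 0
  else 1

/-- The reward order `≺_j` on colors. -/
def RewardLt (j : Fin 2) (v u : ℕ) : Prop :=
  (v < u ∧ u % 2 = (j : ℕ)) ∨ (u < v ∧ v % 2 = ((1 - j : Fin 2) : ℕ))

end ParityGame

open ParityGame

section WCAux
open ParityGame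
variable {S : Type}

/-- Build an infinite sequence by strong recursion on the history. -/
noncomputable def buildPlay (f : ∀ i : ℕ, (Fin i → S) → S) : ℕ → S
  | n => f n (fun k => buildPlay f k)
decreasing_by exact k.isLt

theorem buildPlay_eq (f : ∀ i : ℕ, (Fin i → S) → S) (n : ℕ) :
    buildPlay f n = f n (fun k => buildPlay f k) := by rw [buildPlay]

theorem ofFn_congr' {a b : ℕ} (h : a = b) (g : ℕ → S) :
    (List.ofFn fun m : Fin a => g m) = List.ofFn fun m : Fin b => g m := by subst h; rfl

open Classical in
/-- Follow prefix `p` up to time `n`; afterwards play `σ` at states of player `k`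
and `τ'` (fed with the history since time `n`) elsewhere. -/
noncomputable def mixPlay (G : ParityGame S) (k : Fin 2)
    (σ τ' : List S → S → S) (n : ℕ) (p : ℕ → S) : ℕ → S :=
  buildPlay fun i h =>
    if hi : i ≤ n then p i
    else
      have h1 : i - 1 < i := Nat.sub_lt (by omega) one_pos
      if G.owner (h ⟨i - 1, h1⟩) = k then
        σ (List.ofFn fun m : Fin (i - 1) => h ⟨m, by have := m.isLt; omega⟩) (h ⟨i - 1, h1⟩)
      else
        τ' (List.ofFn fun m : Fin (i - 1 - n) => h ⟨n + m, by have := m.isLt; omega⟩)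
          (h ⟨i - 1, h1⟩)

theorem mixPlay_le (G : ParityGame S) (k : Fin 2) (σ τ' : List S → S → S)
    (n : ℕ) (p : ℕ → S) {i : ℕ} (h : i ≤ n) : mixPlay G k σ τ' n p i = p i := by
  rw [mixPlay, buildPlay_eq]
  simp only [dif_pos h]

theorem mixPlay_own (G : ParityGame S) (k : Fin 2) (σ τ' : List S → S → S)
    (n : ℕ) (p : ℕ → S) {i : ℕ} (h : n ≤ i)
    (ho : G.owner (mixPlay G k σ τ' n p i) = k) :
    mixPlay G k σ τ' n p (i + 1) =
      σ (List.ofFn fun m : Fin i => mixPlay G k σ τ' n p m) (mixPlay G k σ τ' n p i) := by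
  conv_lhs => rw [mixPlay, buildPlay_eq]
  dsimp only
  rw [dif_neg (by omega)]
  simp only [Nat.add_sub_cancel]
  rw [if_pos]
  · rfl
  · exact ho

theorem mixPlay_opp (G : ParityGame S) (k : Fin 2) (σ τ' : List S → S → S)
    (n : ℕ) (p : ℕ → S) {m : ℕ}
    (ho : G.owner (mixPlay G k σ τ' n p (n + m)) ≠ k) :
    mixPlay G k σ τ' n p (n + m + 1) =
      τ' (List.ofFn fun q : Fin m => mixPlay G k σ τ' n p (n + q))
        (mixPlay G k σ τ' n p (n + m)) := by
  conv_lhs => rw [mixPlay, buildPlay_eq]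
  dsimp only
  rw [dif_neg (by omega)]
  simp only [Nat.add_sub_cancel]
  rw [if_neg]
  · have e : n + m - n = m := by omega
    congr 1
    exact ofFn_congr' e (fun q => mixPlay G k σ τ' n p (n + q))
  · exact ho

theorem infOften_shift {π : ℕ → ℕ} {r e : ℕ} :
    InfOften (fun i => π (r + i)) e ↔ InfOften π e := by
  constructor
  · intro h n
    obtain ⟨i, hi, he⟩ := h n
    exact ⟨r + i, by omega, he⟩
  · intro h n
    obtain ⟨i, hi, he⟩ := h (n + r)
    refine ⟨i - r, by omega, ?_⟩
    show π (r + (i - r)) = e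
    have : r + (i - r) = i := by omega
    rw [this]; exact he

theorem inOmega_shift {j : Fin 2} {π : ℕ → ℕ} {r : ℕ}
    (h : InOmega j (fun i => π (r + i))) : InOmega j π := by
  obtain ⟨⟨K, hK⟩, e, he, hmax, hpar⟩ := h
  refine ⟨⟨(Finset.range (r + 1)).sup π ⊔ K, ?_⟩, e, infOften_shift.mp he, ?_, hpar⟩
  · intro i
    rcases Nat.lt_or_ge i r with hi | hi
    · exact le_sup_of_le_left (Finset.le_sup (Finset.mem_range.mpr (by omega)))
    · have : π i = π (r + (i - r)) := by congr 1; omega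
      rw [this]; exact le_sup_of_le_right (hK _)
  · intro e' he'
    exact hmax e' (infOften_shift.mpr he')

theorem inOmega_unique {j j' : Fin 2} {π : ℕ → ℕ}
    (h : InOmega j π) (h' : InOmega j' π) : j = j' := by
  obtain ⟨_, e, he, hmax, hpar⟩ := h
  obtain ⟨_, e', he', hmax', hpar'⟩ := h'
  have : e = e' := le_antisymm (hmax' e he) (hmax e' he')
  subst this
  have : (j : ℕ) = (j' : ℕ) := by rw [← hpar, ← hpar']
  exact Fin.ext this

theorem inOmega_of_beginsInfDom (G : ParityGame S) {j : Fin 2} {ρ : ℕ → S} {d : ℕ}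
    (hb : ∀ s, G.c s ≤ d) (h : G.BeginsInfDom j ρ) : InOmega j (G.colorSeq ρ) := by
  classical
  set π : ℕ → ℕ := G.colorSeq ρ with hπ
  have hπb : ∀ i, π i ≤ d := fun i => hb (ρ i)
  obtain ⟨idx, hidx0, hseg⟩ := h
  have hlt : ∀ ℓ, idx ℓ < idx (ℓ + 1) := fun ℓ => (hseg ℓ).1
  have hmono : StrictMono idx := strictMono_nat_of_lt_succ hlt
  have hge : ∀ ℓ, ℓ ≤ idx ℓ := fun ℓ => hmono.le_apply
  -- the set of values occurring infinitely often
  set E : Finset ℕ := (Finset.range (d + 1)).filter (fun e => InfOften π e) with hE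
  have hEne : E.Nonempty := by
    by_contra hne
    have hnof : ∀ e ∈ Finset.range (d + 1), ∃ n, ∀ i, n ≤ i → π i ≠ e := by
      intro e he
      by_contra hco
      push_neg at hco
      exact hne ⟨e, Finset.mem_filter.mpr ⟨he, fun n => hco n⟩⟩
    choose N hN using hnof
    set M := (Finset.range (d + 1)).attach.sup (fun e => N e.1 e.2) with hM
    have hmm : π M ∈ Finset.range (d + 1) := Finset.mem_range.mpr (by have := hπb M; omega)
    exact hN (π M) hmm M (Finset.le_sup (f := fun e => N e.1 e.2)
      (Finset.mem_attach _ ⟨π M, hmm⟩)) rfl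
  set e := E.max' hEne with he
  have heE : e ∈ E := E.max'_mem hEne
  have heinf : InfOften π e := (Finset.mem_filter.mp heE).2
  have hmax : ∀ e', InfOften π e' → e' ≤ e := by
    intro e' he'
    obtain ⟨i, _, hie⟩ := he' 0
    have : e' ∈ E := Finset.mem_filter.mpr
      ⟨Finset.mem_range.mpr (by have := hπb i; omega), he'⟩
    exact E.le_max' _ this
  -- a bound beyond which all values are ≤ e
  have hB : ∃ B, ∀ i, B ≤ i → π i ≤ e := by
    have hv : ∀ v ∈ Finset.Ioc e d, ∃ n, ∀ i, n ≤ i → π i ≠ v := by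
      intro v hv
      by_contra hco
      push_neg at hco
      have := hmax v (fun n => hco n)
      have := Finset.mem_Ioc.mp hv
      omega
    choose Nv hNv using hv
    refine ⟨(Finset.Ioc e d).attach.sup (fun v => Nv v.1 v.2), ?_⟩
    intro i hi
    by_contra hgt
    push_neg at hgt
    have hmem : π i ∈ Finset.Ioc e d := Finset.mem_Ioc.mpr ⟨hgt, hπb i⟩
    exact hNv (π i) hmem i (le_trans (Finset.le_sup (f := fun v => Nv v.1 v.2)
      (Finset.mem_attach _ ⟨π i, hmem⟩)) hi) rfl
  obtain ⟨B, hBle⟩ := hB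
  -- parity of e
  have hpar : e % 2 = (j : ℕ) := by
    obtain ⟨p, hp1, hp2⟩ := heinf (idx B + 1)
    set T : Finset ℕ := (Finset.range p).filter (fun ℓ => idx ℓ < p) with hT
    have hBT : B ∈ T := Finset.mem_filter.mpr
      ⟨Finset.mem_range.mpr (by have := hge B; omega), by omega⟩
    have hTne : T.Nonempty := ⟨B, hBT⟩
    set ℓ := T.max' hTne with hℓ
    have hℓT : ℓ ∈ T := T.max'_mem hTne
    have hℓlt : idx ℓ < p := (Finset.mem_filter.mp hℓT).2
    have hple : p ≤ idx (ℓ + 1) := by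
      by_contra hco
      push_neg at hco
      have : ℓ + 1 ∈ T := Finset.mem_filter.mpr
        ⟨Finset.mem_range.mpr (by have := hge (ℓ + 1); omega), hco⟩
      have := T.le_max' _ this
      omega
    have hBℓ : B ≤ ℓ := T.le_max' _ hBT
    have hseg2 := (hseg ℓ).2
    set msup := (Finset.Icc (idx ℓ + 1) (idx (ℓ + 1))).sup (fun q => G.c (ρ q)) with hms
    have h1 : msup ≤ e := by
      apply Finset.sup_le
      intro q hq
      have hq' := Finset.mem_Icc.mp hq
      apply hBle
      have h3 : idx B ≤ idx ℓ := hmono.le_iff_le.mpr hBℓ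
      have h4 := hge B
      omega
    have h2 : e ≤ msup := by
      have hpmem : p ∈ Finset.Icc (idx ℓ + 1) (idx (ℓ + 1)) := Finset.mem_Icc.mpr (by omega)
      calc e = G.c (ρ p) := hp2.symm
        _ ≤ msup := Finset.le_sup (f := fun q => G.c (ρ q)) hpmem
    have : msup = e := le_antisymm h1 h2
    rw [← this]; exact hseg2
  exact ⟨⟨d, hπb⟩, e, heinf, hmax, hpar⟩

theorem winCore_subset_winRegion (G : ParityGame S) {j : Fin 2} {d : ℕ}
    (hb : ∀ s, G.c s ≤ d) : G.WinCore j ⊆ G.WinRegion j := by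
  rintro s ⟨σ, hσ, hw⟩
  exact ⟨σ, hσ, fun ρ hp h0 hcomp => inOmega_of_beginsInfDom G hb (hw ρ hp h0 hcomp)⟩

theorem attrRel_mono {G : ParityGame S} {j : Fin 2} {T T' : Set S} (h : T ⊆ T') {s : S}
    (ha : ParityGame.AttrRel G j T s) : ParityGame.AttrRel G j T' s := by
  induction ha with
  | base hb => exact .base (h hb)
  | own ho hr _ ih => exact .own ho hr ih
  | opp ho _ ih => exact .opp ho (fun t ht => ih t ht)

theorem inOmega_shift' {j : Fin 2} {π : ℕ → ℕ} {r : ℕ}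
    (h : InOmega j (fun i => π (i + r))) : InOmega j π := by
  apply inOmega_shift (r := r)
  have he : (fun i => π (r + i)) = fun i => π (i + r) := by
    funext i; rw [Nat.add_comm]
  rw [he]; exact h

theorem tail_hist (ρ : ℕ → S) (m : ℕ) :
    (List.ofFn fun q : Fin (m + 1) => ρ q).tail = List.ofFn fun q : Fin m => ρ (q + 1) := by
  rw [List.ofFn_succ]
  rfl

theorem attr_winRegion (G : ParityGame S) (j : Fin 2) {s : S}
    (h : ParityGame.AttrRel G j (G.WinRegion j) s) : s ∈ G.WinRegion j := by
  classical
  induction h with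
  | base hb => exact hb
  | @own s t hown hR _ ih =>
    obtain ⟨σt, hσt, hwt⟩ := ih
    refine ⟨fun h s' => if h = [] ∧ s' = s then t else σt h.tail s', ?_, ?_⟩
    · intro h s'
      dsimp only
      by_cases hcnd : h = [] ∧ s' = s
      · rw [if_pos hcnd, hcnd.2]; exact hR
      · rw [if_neg hcnd]; exact hσt _ _
    · intro ρ hp h0 hcomp
      have h1 : ρ 1 = t := by
        have hc0 := hcomp 0 (by rw [h0]; exact hown)
        simp only [List.ofFn_zero, Nat.zero_add] at hc0
        rw [if_pos ⟨trivial, h0⟩] at hc0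
        exact hc0
      have hcomp' : G.Compatible j σt (fun m => ρ (m + 1)) := by
        intro m hm
        have hcm := hcomp (m + 1) hm
        show ρ (m + 1 + 1) = σt (List.ofFn fun q : Fin m => ρ (q + 1)) (ρ (m + 1))
        rw [hcm]
        have hne : ¬((List.ofFn fun q : Fin (m + 1) => ρ q) = [] ∧ ρ (m + 1) = s) := by
          rintro ⟨hcnd, -⟩
          have := congrArg List.length hcnd
          simp at this
        show (if (List.ofFn fun q : Fin (m + 1) => ρ q) = [] ∧ ρ (m + 1) = s then t
          else σt (List.ofFn fun q : Fin (m + 1) => ρ q).tail (ρ (m + 1))) = _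
        rw [if_neg hne, tail_hist]
      have hplay' : G.IsPlay (fun m => ρ (m + 1)) := fun m => hp (m + 1)
      exact inOmega_shift' (r := 1) (hwt _ hplay' h1 hcomp')
  | @opp s hown hall ih =>
    have hstrat : ∀ u : S, ∃ σ, G.IsStrategy σ ∧ (u ∈ G.WinRegion j →
        ∀ ρ, G.IsPlay ρ → ρ 0 = u → G.Compatible j σ ρ → InOmega j (G.colorSeq ρ)) := by
      intro u
      by_cases hu : u ∈ G.WinRegion j
      · obtain ⟨σ, h1, h2⟩ := hu
        exact ⟨σ, h1, fun _ => h2⟩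
      · exact ⟨fun h s' => (G.total s').choose, fun h s' => (G.total s').choose_spec,
          fun h => absurd h hu⟩
    choose σg hσg hwg using hstrat
    refine ⟨fun h s' => h.casesOn ((G.total s').choose) (fun x xs => σg (xs.headD s') xs s'),
      ?_, ?_⟩
    · intro h s'
      cases h with
      | nil => exact (G.total s').choose_spec
      | cons x xs => exact hσg _ _ _
    · intro ρ hp h0 hcomp
      have hmem : ρ 1 ∈ G.WinRegion j := ih _ (h0 ▸ hp 0)
      have hcomp' : G.Compatible j (σg (ρ 1)) (fun m => ρ (m + 1)) := by
        intro m hm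
        have hcm := hcomp (m + 1) hm
        show ρ (m + 1 + 1) = σg (ρ 1) (List.ofFn fun q : Fin m => ρ (q + 1)) (ρ (m + 1))
        rw [hcm, List.ofFn_succ]
        have hhead : (List.ofFn fun i : Fin m => ρ ((i : ℕ) + 1)).headD (ρ (m + 1)) = ρ 1 := by
          cases m with
          | zero => simp
          | succ m' => rw [List.ofFn_succ]; rfl
        show σg ((List.ofFn fun i : Fin m => ρ ((i : ℕ) + 1)).headD (ρ (m + 1)))
          (List.ofFn fun i : Fin m => ρ ((i : ℕ) + 1)) (ρ (m + 1)) = _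
        rw [hhead]
      have hplay' : G.IsPlay (fun m => ρ (m + 1)) := fun m => hp (m + 1)
      exact inOmega_shift' (r := 1) (hwg (ρ 1) hmem _ hplay' rfl hcomp')

theorem extend_prefix (G : ParityGame S) (k : Fin 2) {σ : List S → S → S}
    (hσ : G.IsStrategy σ) (n : ℕ) (p : ℕ → S)
    (hpR : ∀ i < n, G.R (p i) (p (i + 1)))
    (hpc : ∀ i < n, G.owner (p i) = k →
      p (i + 1) = σ (List.ofFn fun m : Fin i => p m) (p i)) :
    ∃ μ : ℕ → S, G.IsPlay μ ∧ (∀ i ≤ n, μ i = p i) ∧ G.Compatible k σ μ := by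
  classical
  set τ' : List S → S → S := fun _ s' => (G.total s').choose with hτ'
  set μ := mixPlay G k σ τ' n p with hμ
  have hle : ∀ i ≤ n, μ i = p i := fun i hi => mixPlay_le G k σ τ' n p hi
  have hofn : ∀ i ≤ n, (List.ofFn fun m : Fin i => μ m) = List.ofFn fun m : Fin i => p m := by
    intro i hi
    congr 1
    funext m
    exact hle m (le_trans (le_of_lt m.isLt) hi)
  refine ⟨μ, ?_, hle, ?_⟩
  · intro i
    rcases Nat.lt_or_ge i n with hi | hi
    · rw [hle i hi.le, hle (i + 1) hi]
      exact hpR i hi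
    · by_cases ho : G.owner (μ i) = k
      · rw [hμ, mixPlay_own G k σ τ' n p hi (by rw [← hμ]; exact ho)]
        exact hσ _ _
      · obtain ⟨m, hm⟩ : ∃ m, i = n + m := ⟨i - n, by omega⟩
        subst hm
        rw [hμ, mixPlay_opp G k σ τ' n p (by rw [← hμ]; exact ho)]
        exact (G.total _).choose_spec
  · intro i ho
    rcases Nat.lt_or_ge i n with hi | hi
    · rw [hle (i + 1) hi, hle i hi.le, hofn i hi.le]
      rw [hle i hi.le] at ho
      exact hpc i hi ho
    · exact mixPlay_own G k σ τ' n p hi ho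

theorem avoid_winRegion (G : ParityGame S) {d : ℕ} (hb : ∀ s, G.c s ≤ d) (k : Fin 2)
    {σ : List S → S → S} (hσ : G.IsStrategy σ) {s : S}
    (hwin : ∀ ρ, G.IsPlay ρ → ρ 0 = s → G.Compatible k σ ρ → G.BeginsInfDom k ρ)
    {ρ : ℕ → S} (hp : G.IsPlay ρ) (h0 : ρ 0 = s) (hcomp : G.Compatible k σ ρ) (n : ℕ) :
    ρ n ∉ G.WinRegion (1 - k) := by
  classical
  intro hmem
  have hkk : (1 - k : Fin 2) ≠ k := by
    have : ∀ a : Fin 2, (1 - a : Fin 2) ≠ a := by decide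
    exact this k
  obtain ⟨τ, hτ, hwt⟩ := hmem
  set μ := mixPlay G k σ τ n ρ with hμdef
  have hμle : ∀ i ≤ n, μ i = ρ i := fun i hi => mixPlay_le G k σ τ n ρ hi
  have hplay : G.IsPlay μ := by
    intro i
    rcases Nat.lt_or_ge i n with hi | hi
    · rw [hμle i hi.le, hμle (i + 1) hi]; exact hp i
    · by_cases ho : G.owner (μ i) = k
      · rw [hμdef, mixPlay_own G k σ τ n ρ hi (by rw [← hμdef]; exact ho)]
        exact hσ _ _
      · obtain ⟨m, hm⟩ : ∃ m, i = n + m := ⟨i - n, by omega⟩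
        subst hm
        rw [hμdef, mixPlay_opp G k σ τ n ρ (by rw [← hμdef]; exact ho)]
        exact hτ _ _
  have hμcomp : G.Compatible k σ μ := by
    intro i ho
    rcases Nat.lt_or_ge i n with hi | hi
    · rw [hμle (i + 1) hi]
      have hofn : (List.ofFn fun m : Fin i => μ m) = List.ofFn fun m : Fin i => ρ m := by
        congr 1
        funext m
        exact hμle m (le_trans (le_of_lt m.isLt) hi.le)
      rw [hofn, hμle i hi.le]
      rw [hμle i hi.le] at ho
      exact hcomp i ho
    · exact mixPlay_own G k σ τ n ρ hi ho
  have h2 : InOmega k (G.colorSeq μ) :=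
    inOmega_of_beginsInfDom G hb
      (hwin μ hplay (by rw [hμle 0 (Nat.zero_le n), h0]) hμcomp)
  have hνcomp : G.Compatible (1 - k) τ (fun m => μ (n + m)) := by
    intro m hom
    have hne : G.owner (μ (n + m)) ≠ k := by
      intro hco
      rw [hco] at hom
      exact hkk hom.symm
    exact mixPlay_opp G k σ τ n ρ hne
  have h3 : InOmega (1 - k) (G.colorSeq fun m => μ (n + m)) :=
    hwt _ (fun m => hplay (n + m)) (hμle n le_rfl) hνcomp
  have h4 : InOmega (1 - k) (G.colorSeq μ) := inOmega_shift (r := n) h3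
  exact hkk (inOmega_unique h4 h2)

theorem filterMap_ofFn_subtype {A : Set S} [DecidablePred (· ∈ A)] (m : ℕ) :
    ∀ (f : ℕ → S) (hf : ∀ i, f i ∈ A),
      (List.ofFn fun q : Fin m => f q).filterMap
          (fun x => if hx : x ∈ A then some (⟨x, hx⟩ : A) else none)
        = List.ofFn fun q : Fin m => (⟨f q, hf q⟩ : A) := by
  induction m with
  | zero => intro f hf; simp
  | succ m ih =>
    intro f hf
    rw [List.ofFn_succ, List.ofFn_succ (f := fun q : Fin (m + 1) => (⟨f q, hf q⟩ : A))]
    simp only [List.filterMap_cons, Fin.val_zero, dif_pos (hf 0)]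
    congr 1
    exact ih (fun i => f (i + 1)) (fun i => hf (i + 1))

end WCAux

/-- Let `d` be the largest color of `G`, `k` the player with
`d ≡ k (mod 2)`, and `G'' = G ↾ (S \\ Attr_{1-k}(G, A_{1-k}(G)))` (whose transition
relation is assumed total). Then `A_k(G) = A_k(G'')`. -/
theorem winCore_restrict_attractor_of_opponent_core {S : Type} [Fintype S]
    (G : ParityGame S) (d : ℕ) (k : Fin 2)
    (hc : ∀ s, 1 ≤ G.c s ∧ G.c s ≤ d) (hd : ∃ s, G.c s = d) (hk : d % 2 = (k : ℕ))
    (A : Set S) (hA : A = G.attractor (1 - k) (G.WinCore (1 - k)))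
    (htot : ∀ s : ↥Aᶜ, ∃ t : ↥Aᶜ, G.R s.1 t.1) :
    G.WinCore k = Subtype.val '' ((G.restrict Aᶜ htot).WinCore k) := by
  classical
  have hbound : ∀ s, G.c s ≤ d := fun s => (hc s).2
  have hfin2 : ∀ b a : Fin 2, a ≠ b → a = 1 - b := by decide
  have hAW : ∀ x ∈ A, x ∈ G.WinRegion (1 - k) := by
    intro x hx
    rw [hA] at hx
    exact attr_winRegion G (1 - k)
      (attrRel_mono (winCore_subset_winRegion G hbound) hx)
  have hclosed : ∀ x, x ∉ A → G.owner x ≠ k → ∀ t, G.R x t → t ∉ A := by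
    intro x hx ho t hrt ht
    apply hx
    rw [hA] at ht ⊢
    exact ParityGame.AttrRel.own (hfin2 k _ ho) hrt ht
  apply Set.Subset.antisymm
  · -- A_k(G) ⊆ A_k(G'')
    rintro s ⟨σ, hσ, hw⟩
    have hav : ∀ ρ, G.IsPlay ρ → ρ 0 = s → G.Compatible k σ ρ → ∀ n, ρ n ∉ A :=
      fun ρ hp h0 hcp n hn =>
        avoid_winRegion G hbound k hσ hw hp h0 hcp n (hAW _ hn)
    obtain ⟨μ0, hμ0p, hμ0le, hμ0c⟩ :=
      extend_prefix G k hσ 0 (fun _ => s)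
        (fun i hi => absurd hi (Nat.not_lt_zero i))
        (fun i hi => absurd hi (Nat.not_lt_zero i))
    have hμ00 : μ0 0 = s := hμ0le 0 le_rfl
    have hsA : s ∈ Aᶜ := by
      have h6 := hav μ0 hμ0p hμ00 hμ0c 0
      rw [hμ00] at h6
      exact h6
    set σ'' : List ↥Aᶜ → ↥Aᶜ → ↥Aᶜ := fun h t =>
      if hm : σ (h.map Subtype.val) t.1 ∈ Aᶜ then ⟨σ (h.map Subtype.val) t.1, hm⟩
      else (htot t).choose with hσ''def
    have hσ''s : (G.restrict Aᶜ htot).IsStrategy σ'' := by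
      intro h t
      show G.R t.1 (σ'' h t).1
      by_cases hm : σ (h.map Subtype.val) t.1 ∈ Aᶜ
      · have he : σ'' h t = ⟨σ (h.map Subtype.val) t.1, hm⟩ := by
          simp only [hσ''def]; exact dif_pos hm
        rw [he]; exact hσ _ _
      · have he : σ'' h t = (htot t).choose := by
          simp only [hσ''def]; exact dif_neg hm
        rw [he]; exact (htot t).choose_spec
    refine ⟨⟨s, hsA⟩, ⟨σ'', hσ''s, ?_⟩, rfl⟩
    intro ρ'' hp'' h0'' hcomp''
    set ρ : ℕ → S := fun i => (ρ'' i).1 with hρdef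
    have hρp : G.IsPlay ρ := fun i => hp'' i
    have hρ0 : ρ 0 = s := congrArg Subtype.val h0''
    have key : ∀ i, ∀ m, m < i → G.owner (ρ m) = k →
        ρ (m + 1) = σ (List.ofFn fun q : Fin m => ρ q) (ρ m) := by
      intro i
      induction i with
      | zero => intro m hm; exact absurd hm (Nat.not_lt_zero m)
      | succ i ih =>
        intro m hm hom
        rcases Nat.lt_or_ge m i with h | h
        · exact ih m h hom
        · have hmi : m = i := by omega
          subst hmi
          have hmove : σ (List.ofFn fun q : Fin m => ρ q) (ρ m) ∉ A := by
            set p : ℕ → S := fun q =>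
              if q ≤ m then ρ q else σ (List.ofFn fun q' : Fin m => ρ q') (ρ m) with hpdef
            have hple : ∀ q ≤ m, p q = ρ q := by
              intro q hq; simp only [hpdef]; rw [if_pos hq]
            have hplast : p (m + 1) = σ (List.ofFn fun q' : Fin m => ρ q') (ρ m) := by
              simp only [hpdef]; rw [if_neg (by omega)]
            have hhist : ∀ q ≤ m,
                (List.ofFn fun r : Fin q => p r) = List.ofFn fun r : Fin q => ρ r := by
              intro q hq; congr 1; funext r; exact hple r (by have := r.isLt; omega)
            have hpR : ∀ q < m + 1, G.R (p q) (p (q + 1)) := by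
              intro q hq
              rcases Nat.lt_or_ge q m with h' | h'
              · rw [hple q (by omega), hple (q + 1) (by omega)]; exact hρp q
              · have hqm : q = m := by omega
                subst hqm
                rw [hple q le_rfl, hplast]
                exact hσ _ _
            have hpc : ∀ q < m + 1, G.owner (p q) = k →
                p (q + 1) = σ (List.ofFn fun r : Fin q => p r) (p q) := by
              intro q hq ho'
              rcases Nat.lt_or_ge q m with h' | h'
              · rw [hple q (by omega)] at ho'
                rw [hple (q + 1) (by omega), hhist q (by omega), hple q (by omega)]
                exact ih q h' ho'
              · have hqm : q = m := by omega
                subst hqm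
                rw [hplast, hhist q le_rfl, hple q le_rfl]
            obtain ⟨ν, hνp, hνle, hνc⟩ := extend_prefix G k hσ (m + 1) p hpR hpc
            have hν0 : ν 0 = s := by
              rw [hνle 0 (by omega), hple 0 (by omega)]; exact hρ0
            have h7 := hav ν hνp hν0 hνc (m + 1)
            rw [hνle (m + 1) le_rfl, hplast] at h7
            exact h7
          have hcm := hcomp'' m (by exact hom)
          have hmap : (List.ofFn fun q : Fin m => ρ'' q).map Subtype.val
              = List.ofFn fun q : Fin m => ρ q := by
            rw [List.map_ofFn]; rfl
          have hdite : σ'' (List.ofFn fun q : Fin m => ρ'' q) (ρ'' m)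
              = ⟨σ (List.ofFn fun q : Fin m => ρ q) (ρ m), hmove⟩ := by
            simp only [hσ''def]
            rw [hmap]
            exact dif_pos hmove
          have h5 : ρ (m + 1) = (σ'' (List.ofFn fun q : Fin m => ρ'' q) (ρ'' m)).1 :=
            congrArg Subtype.val hcm
          rw [h5, hdite]
    have hρc : G.Compatible k σ ρ := fun i ho => key (i + 1) i (Nat.lt_succ_self i) ho
    obtain ⟨idx, hidx0, hseg⟩ := hw ρ hρp hρ0 hρc
    exact ⟨idx, hidx0, fun ℓ => hseg ℓ⟩
  · -- A_k(G'') ⊆ A_k(G)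
    rintro s ⟨t0, ht0, rfl⟩
    obtain ⟨σ'', hσ''s, hw''⟩ := ht0
    set lift : List S → List ↥Aᶜ :=
      List.filterMap (fun x => if hx : x ∈ Aᶜ then some (⟨x, hx⟩ : ↥Aᶜ) else none)
      with hliftdef
    set σ : List S → S → S := fun h t =>
      if ht : t ∈ Aᶜ then (σ'' (lift h) ⟨t, ht⟩).1 else (G.total t).choose with hσdef
    have hσs : G.IsStrategy σ := by
      intro h t
      show G.R t (σ h t)
      by_cases ht : t ∈ Aᶜ
      · have he : σ h t = (σ'' (lift h) ⟨t, ht⟩).1 := by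
          simp only [hσdef]; exact dif_pos ht
        rw [he]; exact hσ''s (lift h) ⟨t, ht⟩
      · have he : σ h t = (G.total t).choose := by
          simp only [hσdef]; exact dif_neg ht
        rw [he]; exact (G.total t).choose_spec
    refine ⟨σ, hσs, ?_⟩
    intro ρ hp h0 hcomp
    have hin : ∀ i, ρ i ∈ Aᶜ := by
      intro i
      induction i with
      | zero => rw [h0]; exact t0.2
      | succ i ihh =>
        by_cases ho : G.owner (ρ i) = k
        · rw [hcomp i ho]
          show σ _ (ρ i) ∈ Aᶜ
          have he : σ (List.ofFn fun q : Fin i => ρ q) (ρ i)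
              = (σ'' (lift (List.ofFn fun q : Fin i => ρ q)) ⟨ρ i, ihh⟩).1 := by
            simp only [hσdef]; exact dif_pos ihh
          rw [he]
          exact (σ'' _ _).2
        · exact hclosed (ρ i) ihh ho (ρ (i + 1)) (hp i)
    set ρ'' : ℕ → ↥Aᶜ := fun i => ⟨ρ i, hin i⟩ with hρ''def
    have hp'' : (G.restrict Aᶜ htot).IsPlay ρ'' := fun i => hp i
    have h0'' : ρ'' 0 = t0 := Subtype.ext h0
    have hcomp'' : (G.restrict Aᶜ htot).Compatible k σ'' ρ'' := by
      intro i ho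
      apply Subtype.ext
      show ρ (i + 1) = (σ'' (List.ofFn fun q : Fin i => ρ'' q) (ρ'' i)).1
      rw [hcomp i (by exact ho)]
      have hl : lift (List.ofFn fun q : Fin i => ρ q)
          = List.ofFn fun q : Fin i => ρ'' q := by
        rw [hliftdef]
        exact filterMap_ofFn_subtype i ρ hin
      have he : σ (List.ofFn fun q : Fin i => ρ q) (ρ i)
          = (σ'' (lift (List.ofFn fun q : Fin i => ρ q)) ⟨ρ i, hin i⟩).1 := by
        simp only [hσdef]; exact dif_pos (hin i)
      rw [he, hl]
    obtain ⟨idx, hidx0, hseg⟩ := hw'' ρ'' hp'' h0'' hcomp''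
    exact ⟨idx, hidx0, fun ℓ => hseg ℓ⟩
end

section
/- Let G be a parity game with n states and j ∈ {0,1} a player. Then A^n_j(G) = A_j(G): the set of states from which player j can ensure that the play begins with at least n consecutive j-dominating sequences equals the winning core of player j. -/
open ParityGame

/- ===================================================================
   Auxiliary development for the proof of `winCoreK_card_eq_winCore`.

   Proof idea: given a strategy `σ` forcing every compatible play to begin
   with `n = |S|` consecutive `j`-dominating segments, we build a strategy
   that maintains a *virtual history*: it plays `σ` on the virtual history,
   and whenever the virtual history ends in a repetition of an earlier
   "cut" state (of an anchored system of dominating segments), the cycle is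
   excised from the virtual history ("normalization").  Any infinite virtual
   play would contain an anchored system with `n` cuts, hence (pigeonhole on
   the `n+1` cut states) a repetition, which would have triggered excision;
   so the virtual history length has a finite `liminf` `ℓ*`, and between
   consecutive returns to level `ℓ*` the real play consists of excised
   material whose color maximum is ≡ j (mod 2).  This yields infinitely many
   consecutive `j`-dominating segments of the real play.
   =================================================================== -/

namespace ParityGame

open Classical

variable {S : Type} (G : ParityGame S) (j : Fin 2)

private lemma wc_max_par {a b m : ℕ} (ha : a % 2 = m) (hb : b % 2 = m) :
    max a b % 2 = m := by
  rcases max_choice a b with h | h <;> rw [h] <;> assumption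

private lemma wc_Icc_split {a m b : ℕ} (h1 : a ≤ m + 1) (h2 : m ≤ b) :
    Finset.Icc a b = Finset.Icc a m ∪ Finset.Icc (m + 1) b := by
  ext x; simp only [Finset.mem_Icc, Finset.mem_union]; omega

private lemma wc_sup_split {a m b : ℕ} (f : ℕ → ℕ) (h1 : a ≤ m + 1) (h2 : m ≤ b) :
    (Finset.Icc a b).sup f = max ((Finset.Icc a m).sup f) ((Finset.Icc (m + 1) b).sup f) := by
  rw [wc_Icc_split h1 h2, Finset.sup_union]

/-- Maximum of the colors of the entries of `v` at positions `a..b`. -/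
def sl (v : List S) (a b : ℕ) : ℕ :=
  (Finset.Icc a b).sup fun i => (v.map G.c).getD i 0

lemma sl_split {v : List S} {a m b : ℕ} (h1 : a ≤ m + 1) (h2 : m ≤ b) :
    G.sl v a b = max (G.sl v a m) (G.sl v (m + 1) b) :=
  wc_sup_split _ h1 h2

lemma sl_empty {v : List S} {a b : ℕ} (h : b < a) : G.sl v a b = 0 := by
  rw [sl, Finset.Icc_eq_empty (by omega), Finset.sup_empty]; rfl

lemma sl_single {v : List S} {b : ℕ} : G.sl v b b = (v.map G.c).getD b 0 := by
  rw [sl, Finset.Icc_self, Finset.sup_singleton]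

lemma sl_prefix {u v : List S} (h : u <+: v) {a b : ℕ} (hb : b < u.length) :
    G.sl u a b = G.sl v a b := by
  refine Finset.sup_congr rfl fun i hi => ?_
  have hi' : i < u.length := lt_of_le_of_lt (Finset.mem_Icc.mp hi).2 hb
  have h1 : i < (u.map G.c).length := by simpa using hi'
  have h2 : i < (v.map G.c).length := by simpa using lt_of_lt_of_le hi' h.length_le
  rw [List.getD_eq_getElem _ _ h1, List.getD_eq_getElem _ _ h2]
  exact (h.map G.c).getElem h1

end ParityGame


namespace ParityGame

open Classical

variable {S : Type} (G : ParityGame S) (j : Fin 2)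

/-- The normalization trigger: the list `v` ends in a repetition of an earlier
position `p` such that the prefix `(0,p]` is `j`-dominating (or `p = 0`) and the
segment `(p, last]` is `j`-dominating. -/
def Trig (v : List S) : Prop :=
  ∃ p, p + 1 < v.length ∧ v[p]? = v[v.length - 1]? ∧
    (p = 0 ∨ G.sl v 1 p % 2 = (j : ℕ)) ∧ G.sl v (p + 1) (v.length - 1) % 2 = (j : ℕ)

/-- Normalization: repeatedly excise the cycle identified by the trigger. -/
noncomputable def norm (v : List S) : List S :=
  if h : G.Trig j v then norm (v.take (h.choose + 1)) else v
termination_by v.length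
decreasing_by
  have := h.choose_spec.1
  simp only [List.length_take]
  omega

lemma norm_eq_of_trig {v : List S} (h : G.Trig j v) :
    G.norm j v = G.norm j (v.take (h.choose + 1)) := by
  rw [norm, dif_pos h]

lemma norm_eq_of_not_trig {v : List S} (h : ¬ G.Trig j v) : G.norm j v = v := by
  rw [norm, dif_neg h]

lemma norm_props : ∀ (N : ℕ) (v : List S), v.length ≤ N →
    (G.norm j v <+: v) ∧
    (G.norm j v = [] → v = []) ∧
    ((G.norm j v)[(G.norm j v).length - 1]? = v[v.length - 1]?) ∧
    (G.norm j v = v ∨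
      (((G.norm j v).length ≤ 1 ∨
          G.sl (G.norm j v) 1 ((G.norm j v).length - 1) % 2 = (j : ℕ)) ∧
        G.sl v ((G.norm j v).length) (v.length - 1) % 2 = (j : ℕ))) := by
  intro N
  induction N with
  | zero =>
    intro v hv
    have hvnil : v = [] := List.length_eq_zero_iff.mp (Nat.le_zero.mp hv)
    subst hvnil
    have hnt : ¬ G.Trig j ([] : List S) := by
      rintro ⟨p, hp, -⟩; simp at hp
    rw [G.norm_eq_of_not_trig j hnt]
    exact ⟨List.prefix_rfl, fun _ => rfl, rfl, Or.inl rfl⟩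
  | succ N ih =>
    intro v hv
    by_cases h : G.Trig j v
    · obtain ⟨hp, hrep, hpre, hseg⟩ := h.choose_spec
      set p := h.choose with hpdef
      have hlen : (v.take (p + 1)).length = p + 1 := by
        simp only [List.length_take]; omega
      have hlen' : (v.take (p + 1)).length ≤ N := by omega
      have heq : G.norm j v = G.norm j (v.take (p + 1)) := G.norm_eq_of_trig j h
      obtain ⟨ih1, ih2, ih3, ih4⟩ := ih (v.take (p + 1)) hlen'
      simp only [hlen, Nat.add_sub_cancel] at ih3 ih4
      have htake_pref : v.take (p + 1) <+: v := List.take_prefix _ _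
      have hpref : G.norm j v <+: v := by
        rw [heq]; exact ih1.trans htake_pref
      have hlenle : (G.norm j v).length ≤ p + 1 := by
        rw [heq]; simpa [hlen] using ih1.length_le
      refine ⟨hpref, ?_, ?_, ?_⟩
      · intro hnil
        rw [heq] at hnil
        have := ih2 hnil
        rw [List.take_eq_nil_iff] at this
        rcases this with h1 | h1
        · exact absurd h1 (by omega)
        · exact h1
      · rw [heq, ih3]
        have h1 : (v.take (p + 1))[p]? = v[p]? := by
          rw [List.getElem?_take, if_pos (by omega)]
        rw [h1, hrep]
      · right
        constructor
        · -- anchoring of the result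
          rcases ih4 with he | ⟨ha, _⟩
          · rw [heq, he]
            rcases hpre with h0 | hdom
            · left; rw [hlen]; omega
            · right
              rw [hlen]
              simp only [Nat.add_sub_cancel]
              rw [G.sl_prefix htake_pref (by rw [hlen]; omega)]
              exact hdom
          · rw [heq]; exact ha
        · -- the excised part is j-dominating
          rcases ih4 with he | ⟨_, hfold⟩
          · rw [heq, he, hlen]
            exact hseg
          · have hA : G.sl v ((G.norm j v).length) p % 2 = (j : ℕ) := by
              rw [heq, ← G.sl_prefix htake_pref (a := (G.norm j (v.take (p + 1))).length)
                (by rw [hlen]; omega)]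
              exact hfold
            have hsplit : G.sl v ((G.norm j v).length) (v.length - 1) =
                max (G.sl v ((G.norm j v).length) p) (G.sl v (p + 1) (v.length - 1)) :=
              G.sl_split (by omega) (by omega)
            rw [hsplit]
            exact wc_max_par hA hseg
    · rw [G.norm_eq_of_not_trig j h]
      exact ⟨List.prefix_rfl, fun hh => hh, rfl, Or.inl rfl⟩

lemma norm_prefix (v : List S) : G.norm j v <+: v :=
  (G.norm_props j v.length v le_rfl).1

lemma norm_ne_nil {v : List S} (hv : v ≠ []) : G.norm j v ≠ [] :=
  fun h => hv ((G.norm_props j v.length v le_rfl).2.1 h)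

lemma norm_last (v : List S) :
    (G.norm j v)[(G.norm j v).length - 1]? = v[v.length - 1]? :=
  (G.norm_props j v.length v le_rfl).2.2.1

lemma norm_anch_fold (v : List S) :
    G.norm j v = v ∨
      (((G.norm j v).length ≤ 1 ∨
          G.sl (G.norm j v) 1 ((G.norm j v).length - 1) % 2 = (j : ℕ)) ∧
        G.sl v ((G.norm j v).length) (v.length - 1) % 2 = (j : ℕ)) :=
  (G.norm_props j v.length v le_rfl).2.2.2

end ParityGame


namespace ParityGame

open Classical

variable {S : Type} (G : ParityGame S) (j : Fin 2)

/-- The virtual history determined by a (real) history. -/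
noncomputable def gfun (h : List S) : List S :=
  if hh : h = [] then [] else G.norm j (gfun h.dropLast ++ [h.getLast hh])
termination_by h.length
decreasing_by
  simp only [List.length_dropLast]
  have : h.length ≠ 0 := fun hc => hh (List.length_eq_zero_iff.mp hc)
  omega

/-- The strategy for the winning core: play `σ` on the virtual history. -/
noncomputable def vstr (σ : List S → S → S) : List S → S → S :=
  fun h x => σ ((G.gfun j (h ++ [x])).dropLast) x

lemma vstr_isStrategy {σ : List S → S → S} (hσ : G.IsStrategy σ) :
    G.IsStrategy (G.vstr j σ) :=
  fun _ x => hσ _ x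

variable (ρ : ℕ → S)

/-- The virtual history after `t` steps of the play `ρ`. -/
noncomputable def Vt (t : ℕ) : List S :=
  G.gfun j (List.ofFn fun k : Fin (t + 1) => ρ k.val)

lemma hist_succ (t : ℕ) :
    (List.ofFn fun k : Fin (t + 1) => ρ k.val) =
      (List.ofFn fun k : Fin t => ρ k.val) ++ [ρ t] := by
  rw [List.ofFn_succ']
  simp [List.concat_eq_append, Fin.last]

lemma Vt_zero : G.Vt j ρ 0 = [ρ 0] := by
  have h1 : (List.ofFn fun k : Fin 1 => ρ k.val) = [ρ 0] := by simp
  rw [Vt, h1, gfun]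
  rw [dif_neg (by simp)]
  simp only [List.dropLast_singleton, List.getLast_singleton]
  rw [gfun, dif_pos rfl]
  simp only [List.nil_append]
  apply G.norm_eq_of_not_trig
  rintro ⟨p, hp, -⟩
  simp at hp

lemma gfun_concat (h : List S) (x : S) :
    G.gfun j (h ++ [x]) = G.norm j (G.gfun j h ++ [x]) := by
  rw [gfun, dif_neg (by simp)]
  simp

lemma Vt_succ (t : ℕ) : G.Vt j ρ (t + 1) = G.norm j (G.Vt j ρ t ++ [ρ (t + 1)]) := by
  rw [Vt, hist_succ ρ (t + 1), gfun_concat]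
  rfl

lemma Vt_ne_nil (t : ℕ) : G.Vt j ρ t ≠ [] := by
  induction t with
  | zero => rw [Vt_zero]; simp
  | succ t ih =>
    rw [Vt_succ]
    exact G.norm_ne_nil j (by simp)

lemma Vt_pos (t : ℕ) : 1 ≤ (G.Vt j ρ t).length :=
  Nat.one_le_iff_ne_zero.mpr fun h => G.Vt_ne_nil j ρ t (List.length_eq_zero_iff.mp h)

lemma Vt_last (t : ℕ) :
    (G.Vt j ρ t)[(G.Vt j ρ t).length - 1]? = some (ρ t) := by
  induction t with
  | zero => rw [Vt_zero]; rfl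
  | succ t ih =>
    rw [Vt_succ, G.norm_last]
    have hlen : (G.Vt j ρ t ++ [ρ (t + 1)]).length = (G.Vt j ρ t).length + 1 := by simp
    rw [hlen]
    simp only [Nat.add_sub_cancel]
    rw [List.getElem?_append_right (le_refl _)]
    simp

lemma Vt_succ_prefix (t : ℕ) : G.Vt j ρ (t + 1) <+: G.Vt j ρ t ++ [ρ (t + 1)] := by
  rw [Vt_succ]; exact G.norm_prefix j _

/-- Virtual histories are valid σ-histories. -/
def VH (σ : List S → S → S) (s : S) (v : List S) : Prop :=
  v ≠ [] ∧ v.getD 0 s = s ∧ ∀ i, i + 1 < v.length →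
    G.R (v.getD i s) (v.getD (i + 1) s) ∧
    (G.owner (v.getD i s) = j → v.getD (i + 1) s = σ (v.take i) (v.getD i s))

lemma VH_prefix {σ : List S → S → S} {s : S} {u v : List S} (hv : G.VH j σ s v)
    (hp : u <+: v) (hu : u ≠ []) : G.VH j σ s u := by
  obtain ⟨-, hhead, htr⟩ := hv
  have hul : 0 < u.length := List.length_pos_iff.mpr hu
  have hgd : ∀ i, i < u.length → u.getD i s = v.getD i s := by
    intro i hi
    rw [List.getD_eq_getElem _ _ hi, List.getD_eq_getElem _ _ (lt_of_lt_of_le hi hp.length_le)]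
    exact hp.getElem hi
  have hlen : u.length ≤ v.length := hp.length_le
  refine ⟨hu, by rw [hgd 0 hul]; exact hhead, fun i hi => ?_⟩
  have h1 : i < u.length := by omega
  have h2 : i + 1 < u.length := hi
  have htake : u.take i = v.take i := by
    have h3 : u.length ≤ v.length := hp.length_le
    conv_lhs => rw [List.prefix_iff_eq_take.mp hp]
    rw [List.take_take]
    congr 1
    omega
  rw [hgd i h1, hgd (i + 1) h2, htake]
  exact htr i (by omega)

end ParityGame


namespace ParityGame

open Classical

variable {S : Type} (G : ParityGame S) (j : Fin 2) (ρ : ℕ → S)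

lemma Vt_getD_last (s : S) (t : ℕ) :
    (G.Vt j ρ t).getD ((G.Vt j ρ t).length - 1) s = ρ t := by
  rw [List.getD_eq_getElem?_getD, G.Vt_last j ρ t]
  rfl

/-- The virtual histories along a play compatible with `vstr σ` are valid
`σ`-histories. -/
lemma VH_Vt {σ : List S → S → S} {s : S}
    (hplay : G.IsPlay ρ) (h0 : ρ 0 = s) (hcomp : G.Compatible j (G.vstr j σ) ρ) :
    ∀ t, G.VH j σ s (G.Vt j ρ t) := by
  intro t
  induction t with
  | zero =>
    rw [G.Vt_zero]
    refine ⟨by simp, by simpa using h0, fun i hi => ?_⟩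
    simp at hi
  | succ t ih =>
    have hVlen := G.Vt_pos j ρ t
    set v := G.Vt j ρ t with hv
    have hw : G.VH j σ s (v ++ [ρ (t + 1)]) := by
      obtain ⟨hne, hhead, htr⟩ := ih
      refine ⟨by simp, ?_, fun i hi => ?_⟩
      · rw [List.getD_append _ _ _ _ (by omega)]
        exact hhead
      · have hlen : (v ++ [ρ (t + 1)]).length = v.length + 1 := by simp
        rw [hlen] at hi
        by_cases hcase : i + 1 < v.length
        · have hgd1 : (v ++ [ρ (t + 1)]).getD i s = v.getD i s :=
            List.getD_append _ _ _ _ (by omega)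
          have hgd2 : (v ++ [ρ (t + 1)]).getD (i + 1) s = v.getD (i + 1) s :=
            List.getD_append _ _ _ _ (by omega)
          have htk : (v ++ [ρ (t + 1)]).take i = v.take i :=
            List.take_append_of_le_length (by omega)
          rw [hgd1, hgd2, htk]
          exact htr i hcase
        · -- boundary transition
          have hieq : i = v.length - 1 := by omega
          have hgd1 : (v ++ [ρ (t + 1)]).getD i s = ρ t := by
            rw [List.getD_append _ _ _ _ (by omega), hieq]
            exact G.Vt_getD_last j ρ s t
          have hgd2 : (v ++ [ρ (t + 1)]).getD (i + 1) s = ρ (t + 1) := by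
            rw [List.getD_eq_getElem?_getD]
            have : i + 1 = v.length := by omega
            rw [this, List.getElem?_append_right (le_refl _)]
            simp
          have htk : (v ++ [ρ (t + 1)]).take i = v.dropLast := by
            rw [List.take_append_of_le_length (by omega), hieq, List.dropLast_eq_take]
          rw [hgd1, hgd2, htk]
          refine ⟨hplay t, fun how => ?_⟩
          have := hcomp t how
          rw [this]
          show G.vstr j σ _ (ρ t) = σ v.dropLast (ρ t)
          rw [vstr]
          congr 1
          rw [← hist_succ]
          rfl
    have hpre := G.Vt_succ_prefix j ρ t
    rw [← hv] at hpre
    exact G.VH_prefix j hw (by rw [G.Vt_succ, ← hv]; exact G.norm_prefix j _)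
      (by rw [G.Vt_succ, ← hv]; exact G.norm_ne_nil j (by simp))

/-- A triggering list is never a prefix of a virtual history. -/
lemma no_trig_prefix : ∀ (t : ℕ) (u : List S), G.Trig j u → ¬ u <+: G.Vt j ρ t := by
  intro t
  induction t with
  | zero =>
    intro u htr hpre
    obtain ⟨p, hp, -⟩ := htr
    have := hpre.length_le
    rw [G.Vt_zero] at this
    simp at this
    omega
  | succ t ih =>
    intro u htr hpre
    have h1 : u <+: G.Vt j ρ t ++ [ρ (t + 1)] := hpre.trans (G.Vt_succ_prefix j ρ t)
    have hlen1 : u.length ≤ (G.Vt j ρ t).length + 1 := by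
      have := h1.length_le; simpa using this
    rcases lt_or_eq_of_le hlen1 with hlt | heq
    · -- then u is a prefix of the previous virtual history
      refine ih u htr ?_
      have : u = (G.Vt j ρ t ++ [ρ (t + 1)]).take u.length := List.prefix_iff_eq_take.mp h1
      rw [List.take_append_of_le_length (by omega)] at this
      rw [this]
      exact List.take_prefix _ _
    · -- then u is the whole extended history, which triggers: normalization shrinks it
      have hu : u = G.Vt j ρ t ++ [ρ (t + 1)] := by
        apply List.IsPrefix.eq_of_length h1
        simpa using heq
      have htr' : G.Trig j (G.Vt j ρ t ++ [ρ (t + 1)]) := hu ▸ htr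
      have hshrink : (G.Vt j ρ (t + 1)).length < u.length := by
        rw [G.Vt_succ, G.norm_eq_of_trig j htr', hu]
        have h2 := htr'.choose_spec.1
        have h3 := (G.norm_prefix j ((G.Vt j ρ t ++ [ρ (t + 1)]).take (htr'.choose + 1))).length_le
        rw [List.length_take] at h3
        omega
      have := hpre.length_le
      omega

end ParityGame


namespace ParityGame

open Classical

variable {S : Type} (G : ParityGame S) (j : Fin 2) (ρ : ℕ → S)

/-- The bookkeeping invariant: within a window in which the virtual history
never becomes shorter than at time `r`, the maximal real color since `r` is the
maximum of the colors in the virtual tail and (possibly) an excised value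
congruent to `j`.  Moreover in the absence of excisions the virtual history
grows strictly. -/
lemma inv_lemma (r : ℕ) : ∀ (t : ℕ), r ≤ t →
    (∀ u, r ≤ u → u ≤ t → (G.Vt j ρ r).length ≤ (G.Vt j ρ u).length) →
    ((((Finset.Icc (r + 1) t).sup fun k => G.c (ρ k)) =
        G.sl (G.Vt j ρ t) ((G.Vt j ρ r).length) ((G.Vt j ρ t).length - 1) ∧
      ∀ u, r < u → u ≤ t → (G.Vt j ρ (u - 1)).length < (G.Vt j ρ u).length) ∨
    (∃ d, d % 2 = (j : ℕ) ∧
      ((Finset.Icc (r + 1) t).sup fun k => G.c (ρ k)) =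
        max (G.sl (G.Vt j ρ t) ((G.Vt j ρ r).length) ((G.Vt j ρ t).length - 1)) d)) := by
  intro t ht
  induction t, ht using Nat.le_induction with
  | base =>
    intro _
    left
    constructor
    · rw [Finset.Icc_eq_empty (by omega), Finset.sup_empty,
        G.sl_empty (by have := G.Vt_pos j ρ r; omega)]
      rfl
    · intro u h1 h2; omega
  | succ t ht ih =>
    intro H
    have hm1 : 1 ≤ (G.Vt j ρ r).length := G.Vt_pos j ρ r
    have hmt : (G.Vt j ρ r).length ≤ (G.Vt j ρ t).length := H t ht (by omega)
    have hmt1 : (G.Vt j ρ r).length ≤ (G.Vt j ρ (t + 1)).length :=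
      H (t + 1) (by omega) (by omega)
    have hVtpos : 1 ≤ (G.Vt j ρ t).length := G.Vt_pos j ρ t
    have hVt1pos : 1 ≤ (G.Vt j ρ (t + 1)).length := G.Vt_pos j ρ (t + 1)
    set m := (G.Vt j ρ r).length with hmdef
    set w : List S := G.Vt j ρ t ++ [ρ (t + 1)] with hwdef
    have hVs : G.Vt j ρ (t + 1) = G.norm j w := G.Vt_succ j ρ t
    have hwlen : w.length = (G.Vt j ρ t).length + 1 := by simp [hwdef]
    have hnlen : (G.Vt j ρ (t + 1)).length ≤ w.length := by
      rw [hVs]; exact (G.norm_prefix j w).length_le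
    -- the real sup recurrence
    have hsup : ((Finset.Icc (r + 1) (t + 1)).sup fun k => G.c (ρ k)) =
        max ((Finset.Icc (r + 1) t).sup fun k => G.c (ρ k)) (G.c (ρ (t + 1))) := by
      rw [wc_sup_split _ (by omega) (by omega : t ≤ t + 1), Finset.Icc_self,
        Finset.sup_singleton]
    -- tail of the extended virtual history
    have hgetw : (w.map G.c).getD ((G.Vt j ρ t).length) 0 = G.c (ρ (t + 1)) := by
      have hmap : w.map G.c = ((G.Vt j ρ t).map G.c) ++ [G.c (ρ (t + 1))] := by
        simp [hwdef]
      rw [List.getD_eq_getElem?_getD, hmap,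
        List.getElem?_append_right (by simp)]
      simp
    have htail_w : G.sl w m (w.length - 1) =
        max (G.sl (G.Vt j ρ t) m ((G.Vt j ρ t).length - 1)) (G.c (ρ (t + 1))) := by
      have hA : G.sl w m ((G.Vt j ρ t).length - 1) =
          G.sl (G.Vt j ρ t) m ((G.Vt j ρ t).length - 1) :=
        (G.sl_prefix (List.prefix_append _ _) (by omega)).symm
      have hB : G.sl w ((G.Vt j ρ t).length - 1 + 1) ((G.Vt j ρ t).length) =
          G.c (ρ (t + 1)) := by
        have h1 : (G.Vt j ρ t).length - 1 + 1 = (G.Vt j ρ t).length := by omega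
        rw [h1, G.sl_single, hgetw]
      have hC := G.sl_split (v := w) (a := m) (m := (G.Vt j ρ t).length - 1)
        (b := (G.Vt j ρ t).length) (by omega) (by omega)
      rw [hwlen, Nat.add_sub_cancel, hC, hA, hB]
    rcases G.norm_anch_fold j w with hid | ⟨-, hfold⟩
    · -- no excision
      have hVw : G.Vt j ρ (t + 1) = w := by rw [hVs, hid]
      rcases ih (fun u h1 h2 => H u h1 (by omega)) with ⟨hPt, hnopop⟩ | ⟨d, hd, hDt⟩
      · left
        constructor
        · rw [hsup, hPt, hVw]
          omega
        · intro u h1 h2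
          rcases Nat.lt_or_ge u (t + 1) with h3 | h3
          · exact hnopop u h1 (by omega)
          · have hu : u = t + 1 := by omega
            rw [hu]
            simp only [Nat.add_sub_cancel]
            rw [hVw, hwlen]
            omega
      · right
        refine ⟨d, hd, ?_⟩
        rw [hsup, hDt, hVw]
        omega
    · -- an excision took place
      have hE : G.sl w ((G.Vt j ρ (t + 1)).length) (w.length - 1) % 2 = (j : ℕ) := by
        rw [hVs]; exact hfold
      have hsplitw : G.sl w m (w.length - 1) =
          max (G.sl w m ((G.Vt j ρ (t + 1)).length - 1))
            (G.sl w ((G.Vt j ρ (t + 1)).length) (w.length - 1)) := by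
        rw [G.sl_split (v := w) (m := (G.Vt j ρ (t + 1)).length - 1) (by omega) (by omega)]
        congr 2
        omega
      have htail1 : G.sl w m ((G.Vt j ρ (t + 1)).length - 1) =
          G.sl (G.Vt j ρ (t + 1)) m ((G.Vt j ρ (t + 1)).length - 1) := by
        rw [G.sl_prefix (u := G.Vt j ρ (t + 1)) (hVs ▸ G.norm_prefix j w) (by omega)]
      rcases ih (fun u h1 h2 => H u h1 (by omega)) with ⟨hPt, -⟩ | ⟨d, hd, hDt⟩
      · right
        refine ⟨G.sl w ((G.Vt j ρ (t + 1)).length) (w.length - 1), hE, ?_⟩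
        rw [hsup, hPt]
        omega
      · right
        refine ⟨max (G.sl w ((G.Vt j ρ (t + 1)).length) (w.length - 1)) d,
          wc_max_par hE hd, ?_⟩
        rw [hsup, hDt]
        omega

end ParityGame


namespace ParityGame

open Classical

variable {S : Type} (G : ParityGame S) (j : Fin 2) (ρ : ℕ → S)

/-- If the lengths of the virtual histories had no infinitely-recurring value,
the virtual play would converge to an infinite `σ`-compatible play, which by
the `n`-domination hypothesis and the pigeonhole principle would contain a
trigger, contradiction. -/
lemma exists_level [Fintype S] {σ : List S → S → S} {s : S}
    (hplay : G.IsPlay ρ) (h0 : ρ 0 = s) (hcomp : G.Compatible j (G.vstr j σ) ρ)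
    (hforce : ∀ ρ', G.IsPlay ρ' → ρ' 0 = s → G.Compatible j σ ρ' →
      G.BeginsKDom j ρ' (Fintype.card S)) :
    ∃ ℓ, {t | (G.Vt j ρ t).length = ℓ}.Infinite := by
  by_contra hP
  push_neg at hP
  -- the lengths tend to infinity
  have hfin : ∀ k, {t | (G.Vt j ρ t).length ≤ k}.Finite := by
    intro k
    refine Set.Finite.subset (Set.Finite.biUnion (Set.finite_Icc 0 k)
      (fun ℓ _ => hP ℓ)) ?_
    intro t ht
    exact Set.mem_biUnion (Set.mem_Icc.mpr ⟨Nat.zero_le _, ht⟩) rfl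
  have hstab : ∀ k, ∃ T, ∀ t, T ≤ t → k < (G.Vt j ρ t).length := by
    intro k
    obtain ⟨B, hB⟩ := (hfin k).bddAbove
    refine ⟨B + 1, fun t ht => ?_⟩
    by_contra hc
    have := hB (show (G.Vt j ρ t).length ≤ k by omega)
    omega
  set T : ℕ → ℕ := fun k => (hstab k).choose with hTdef
  have hT : ∀ k t, T k ≤ t → k < (G.Vt j ρ t).length := fun k t ht =>
    (hstab k).choose_spec t ht
  set T' : ℕ → ℕ := fun m => (Finset.range (m + 1)).sup T with hT'def
  have hTT' : ∀ k m, k ≤ m → T k ≤ T' m := fun k m hk =>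
    Finset.le_sup (Finset.mem_range.mpr (by omega))
  have hT'mono : ∀ a b, a ≤ b → T' a ≤ T' b := fun a b hab =>
    Finset.sup_mono (Finset.range_subset_range.mpr (by omega))
  have hTlt : ∀ k t, T' k ≤ t → k < (G.Vt j ρ t).length := fun k t ht =>
    hT k t (le_trans (hTT' k k le_rfl) ht)
  -- the limit virtual play
  have agree : ∀ k t1 t2, t1 ≤ t2 →
      (∀ u, t1 ≤ u → u ≤ t2 → k < (G.Vt j ρ u).length) →
      (G.Vt j ρ t2).getD k s = (G.Vt j ρ t1).getD k s := by
    intro k t1 t2 h12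
    induction t2, h12 using Nat.le_induction with
    | base => intro _; rfl
    | succ t ht ih =>
      intro hcond
      have h1 : k < (G.Vt j ρ (t + 1)).length := hcond (t + 1) (by omega) (by omega)
      have h2 : k < (G.Vt j ρ t).length := hcond t ht (by omega)
      have h3 : k < (G.Vt j ρ t ++ [ρ (t + 1)]).length := by simp; omega
      rw [List.getD_eq_getElem _ _ h1]
      rw [(G.Vt_succ_prefix j ρ t).getElem h1]
      have h4 : (G.Vt j ρ t ++ [ρ (t + 1)])[k] = (G.Vt j ρ t)[k] :=
        List.getElem_append_left h2
      rw [h4, ← List.getD_eq_getElem _ s h2]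
      exact ih (fun u hu1 hu2 => hcond u hu1 (by omega))
  set vv : ℕ → S := fun k => (G.Vt j ρ (T' k)).getD k s with hvvdef
  have agree2 : ∀ k t, T' k ≤ t → (G.Vt j ρ t).getD k s = vv k := by
    intro k t ht
    exact agree k (T' k) t ht (fun u h1 h2 => hTlt k u h1)
  have hVH : ∀ t, G.VH j σ s (G.Vt j ρ t) := G.VH_Vt j ρ hplay h0 hcomp
  -- vv is a σ-compatible play from s
  have vv0 : vv 0 = s := by
    have := (hVH (T' 0)).2.1
    simpa [hvvdef] using this
  have vplay : G.IsPlay vv := by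
    intro k
    have hk1 : k + 1 < (G.Vt j ρ (T' (k + 1))).length := hTlt (k + 1) _ le_rfl
    have := ((hVH (T' (k + 1))).2.2 k hk1).1
    rwa [agree2 k _ (hT'mono k (k + 1) (by omega)), agree2 (k + 1) _ le_rfl] at this
  have vcomp : G.Compatible j σ vv := by
    intro i how
    have hk1 : i + 1 < (G.Vt j ρ (T' (i + 1))).length := hTlt (i + 1) _ le_rfl
    have hgdi : (G.Vt j ρ (T' (i + 1))).getD i s = vv i :=
      agree2 i _ (hT'mono i (i + 1) (by omega))
    have := ((hVH (T' (i + 1))).2.2 i hk1).2 (by rw [hgdi]; exact how)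
    rw [hgdi, agree2 (i + 1) _ le_rfl] at this
    rw [this]
    congr 1
    apply List.ext_getElem
    · simp
      omega
    · intro n h1 h2
      have hn : n < i := by simpa using h2
      have hnl : n < (G.Vt j ρ (T' (i + 1))).length := by
        have := List.length_take_le i (G.Vt j ρ (T' (i + 1)))
        omega
      rw [List.getElem_take, List.getElem_ofFn]
      rw [← List.getD_eq_getElem _ s hnl]
      exact agree2 n _ (hT'mono n (i + 1) (by omega))
  -- the limit play begins with `n` dominating segments: pigeonhole
  obtain ⟨idx, hidx0, hseg⟩ := hforce vv vplay vv0 vcomp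
  set n := Fintype.card S with hncard
  have hmono : ∀ b, b ≤ n → ∀ a, a < b → idx a < idx b := by
    intro b
    induction b with
    | zero => intro _ a ha; omega
    | succ b ih =>
      intro hb a ha
      have hb' : idx b < idx (b + 1) := (hseg b (by omega)).1
      rcases Nat.lt_or_ge a b with h | h
      · exact lt_trans (ih (by omega) a h) hb'
      · have : a = b := by omega
        rw [this]; exact hb'
  have hcard : Fintype.card S < Fintype.card (Fin (n + 1)) := by simp [hncard]
  obtain ⟨a0, b0, hne, heq⟩ :=
    Fintype.exists_ne_map_eq_of_card_lt (fun i : Fin (n + 1) => vv (idx i.val)) hcard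
  obtain ⟨A, B, hAB, hBn, heqAB⟩ :
      ∃ A B : ℕ, A < B ∧ B ≤ n ∧ vv (idx A) = vv (idx B) := by
    rcases hne.lt_or_gt with h | h
    · exact ⟨a0.val, b0.val, h, b0.is_le, heq⟩
    · exact ⟨b0.val, a0.val, h, a0.is_le, heq.symm⟩
  have hidxAB : idx A < idx B := hmono B hBn A hAB
  -- the triggering prefix of the limit play
  set u : List S := List.ofFn (fun k : Fin (idx B + 1) => vv k.val) with hudef
  have hulen : u.length = idx B + 1 := by simp [hudef]
  have hgetu? : ∀ i, i < idx B + 1 → u[i]? = some (vv i) := by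
    intro i hi
    rw [hudef, List.getElem?_ofFn]
    simp [List.ofFnNthVal, hi]
  have hgetu : ∀ i, i ≤ idx B → (u.map G.c).getD i 0 = G.c (vv i) := by
    intro i hi
    rw [List.getD_eq_getElem?_getD, List.getElem?_map, hgetu? i (by omega)]
    rfl
  have hslu : ∀ a b, b ≤ idx B →
      G.sl u a b = (Finset.Icc a b).sup fun k => G.c (vv k) := by
    intro a b hb
    refine Finset.sup_congr rfl fun i hi => ?_
    exact hgetu i (le_trans (Finset.mem_Icc.mp hi).2 hb)
  have hmerge : ∀ bb, bb ≤ n → ∀ aa, aa < bb →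
      ((Finset.Icc (idx aa + 1) (idx bb)).sup fun k => G.c (vv k)) % 2 = (j : ℕ) := by
    intro bb
    induction bb with
    | zero => intro _ aa ha; omega
    | succ bb ih =>
      intro hb aa ha
      have hsegb := hseg bb (by omega)
      rcases Nat.lt_or_ge aa bb with h | h
      · have hsplit : ((Finset.Icc (idx aa + 1) (idx (bb + 1))).sup fun k => G.c (vv k)) =
            max ((Finset.Icc (idx aa + 1) (idx bb)).sup fun k => G.c (vv k))
              ((Finset.Icc (idx bb + 1) (idx (bb + 1))).sup fun k => G.c (vv k)) := by
          refine wc_sup_split _ ?_ ?_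
          · have := hmono bb (by omega) aa h
            omega
          · exact hsegb.1.le
        rw [hsplit]
        exact wc_max_par (ih (by omega) aa h) hsegb.2
      · have : aa = bb := by omega
        rw [this]
        exact hsegb.2
  have htrig : G.Trig j u := by
    refine ⟨idx A, by omega, ?_, ?_, ?_⟩
    · have h2 : u[u.length - 1]? = some (vv (idx B)) := by
        have he : u.length - 1 = idx B := by omega
        rw [he]
        exact hgetu? (idx B) (by omega)
      rw [hgetu? (idx A) (by omega), h2, heqAB]
    · rcases Nat.eq_zero_or_pos A with hA0 | hApos
      · left; rw [hA0, hidx0]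
      · right
        rw [hslu 1 (idx A) hidxAB.le]
        have := hmerge A (by omega) 0 hApos
        rwa [hidx0] at this
    · rw [hulen]
      simp only [Nat.add_sub_cancel]
      rw [hslu (idx A + 1) (idx B) le_rfl]
      exact hmerge B hBn A hAB
  -- but `u` is a prefix of a virtual history: contradiction
  have hpref : u <+: G.Vt j ρ (T' (idx B)) := by
    have hlenB : idx B < (G.Vt j ρ (T' (idx B))).length := hTlt (idx B) _ le_rfl
    have : u = (G.Vt j ρ (T' (idx B))).take (idx B + 1) := by
      apply List.ext_getElem
      · rw [hulen]
        simp
        omega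
      · intro m h1 h2
        have hm : m < idx B + 1 := by omega
        have hu : u[m] = vv m := by
          have := hgetu? m hm
          rw [List.getElem?_eq_getElem h1] at this
          exact Option.some_injective _ this
        rw [hu, List.getElem_take]
        rw [← List.getD_eq_getElem _ s (by omega)]
        exact (agree2 m _ (hT'mono m (idx B) (by omega))).symm
    rw [this]
    exact List.take_prefix _ _
  exact G.no_trig_prefix j ρ (T' (idx B)) u htrig hpref

end ParityGame


namespace ParityGame

open Classical

variable {S : Type} (G : ParityGame S) (j : Fin 2)

/-- The hard inclusion: forcing `|S|` consecutive dominating segments implies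
membership in the winning core. -/
lemma winCoreK_subset_winCore [Fintype S] :
    G.WinCoreK j (Fintype.card S) ⊆ G.WinCore j := by
  rintro s ⟨σ, hσ, hforce⟩
  refine ⟨G.vstr j σ, G.vstr_isStrategy j hσ, ?_⟩
  intro ρ hplay h0 hcomp
  obtain ⟨ℓ0, hℓ0⟩ := G.exists_level j ρ hplay h0 hcomp hforce
  have hex : ∃ ℓ, {t | (G.Vt j ρ t).length = ℓ}.Infinite := ⟨ℓ0, hℓ0⟩
  set L := Nat.find hex with hLdef
  have hLinf : {t | (G.Vt j ρ t).length = L}.Infinite := Nat.find_spec hex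
  have hLmin : ∀ ℓ, ℓ < L → {t | (G.Vt j ρ t).length = ℓ}.Finite := fun ℓ hℓ =>
    Set.not_infinite.mp (Nat.find_min hex hℓ)
  have hL1 : 1 ≤ L := by
    obtain ⟨t, ht⟩ := hLinf.nonempty
    have ht' : (G.Vt j ρ t).length = L := ht
    have := G.Vt_pos j ρ t
    omega
  have hbelow : {t | (G.Vt j ρ t).length < L}.Finite := by
    refine Set.Finite.subset (Set.Finite.biUnion (Set.finite_Iio L)
      (fun ℓ hℓ => hLmin ℓ hℓ)) ?_
    intro t ht
    exact Set.mem_biUnion ht rfl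
  obtain ⟨T0, hT0⟩ : ∃ T0, ∀ t, T0 ≤ t → L ≤ (G.Vt j ρ t).length := by
    obtain ⟨B, hB⟩ := hbelow.bddAbove
    refine ⟨B + 1, fun t ht => ?_⟩
    by_contra hc
    have := hB (show (G.Vt j ρ t).length < L by omega)
    omega
  have hRet : ∀ N : ℕ, ∃ t, N < t ∧ (G.Vt j ρ t).length = L := by
    intro N
    obtain ⟨t, ht, htgt⟩ := hLinf.exists_gt N
    exact ⟨t, htgt, ht⟩
  set tau : ℕ → ℕ :=
    fun i => Nat.rec 0 (fun _ prev => (hRet (max prev T0)).choose) i with htaudef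
  have htau0 : tau 0 = 0 := rfl
  have htauS : ∀ i, max (tau i) T0 < tau (i + 1) ∧ (G.Vt j ρ (tau (i + 1))).length = L :=
    fun i => (hRet (max (tau i) T0)).choose_spec
  refine ⟨tau, htau0, ?_⟩
  intro i
  have hrt : tau i < tau (i + 1) := by have := (htauS i).1; omega
  have hTt' : T0 < tau (i + 1) := by have := (htauS i).1; omega
  have hlen' : (G.Vt j ρ (tau (i + 1))).length = L := (htauS i).2
  -- the step into `tau (i+1)` is a pop
  have hpop : ¬ (G.Vt j ρ (tau (i + 1) - 1)).length < (G.Vt j ρ (tau (i + 1))).length := by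
    have h1 : T0 ≤ tau (i + 1) - 1 := by omega
    have := hT0 (tau (i + 1) - 1) h1
    omega
  -- the window hypothesis for the invariant
  have hwin : ∀ u, tau i ≤ u → u ≤ tau (i + 1) →
      (G.Vt j ρ (tau i)).length ≤ (G.Vt j ρ u).length := by
    intro u h1 h2
    rcases Nat.eq_zero_or_pos i with hi0 | hipos
    · rw [hi0, htau0, G.Vt_zero]
      simpa using G.Vt_pos j ρ u
    · have hlenr : (G.Vt j ρ (tau i)).length = L := by
        obtain ⟨i', rfl⟩ : ∃ i', i = i' + 1 := ⟨i - 1, by omega⟩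
        exact (htauS i').2
      have hTr : T0 < tau i := by
        obtain ⟨i', rfl⟩ : ∃ i', i = i' + 1 := ⟨i - 1, by omega⟩
        have := (htauS i').1; omega
      rw [hlenr]
      exact hT0 u (by omega)
  rcases G.inv_lemma j ρ (tau i) (tau (i + 1)) hrt.le hwin with ⟨-, hnopop⟩ | ⟨d, hd, hDeq⟩
  · exact absurd (hnopop (tau (i + 1)) hrt le_rfl) hpop
  refine ⟨hrt, ?_⟩
  rw [hDeq]
  rcases Nat.eq_zero_or_pos i with hi0 | hipos
  · -- first window: use the anchoring of the stable prefix
    subst hi0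
    have hm1 : (G.Vt j ρ (tau 0)).length = 1 := by rw [htau0, G.Vt_zero]; rfl
    have ht'e : tau (0 + 1) - 1 + 1 = tau (0 + 1) := by omega
    have hVs := G.Vt_succ j ρ (tau (0 + 1) - 1)
    rw [ht'e] at hVs
    rcases G.norm_anch_fold j (G.Vt j ρ (tau (0 + 1) - 1) ++ [ρ (tau (0 + 1))])
      with hid | ⟨hanch, -⟩
    · exfalso
      rw [hid] at hVs
      have : (G.Vt j ρ (tau (0 + 1))).length =
          (G.Vt j ρ (tau (0 + 1) - 1)).length + 1 := by rw [hVs]; simp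
      omega
    · rw [← hVs] at hanch
      rw [hm1]
      rcases hanch with hsmall | hdom
      · have hTAIL : G.sl (G.Vt j ρ (tau (0 + 1))) 1
            ((G.Vt j ρ (tau (0 + 1))).length - 1) = 0 := by
          apply G.sl_empty
          omega
        rw [hTAIL]
        simpa using hd
      · exact wc_max_par hdom hd
  · -- later windows: the whole window is excised material
    have hlenr : (G.Vt j ρ (tau i)).length = L := by
      obtain ⟨i', rfl⟩ : ∃ i', i = i' + 1 := ⟨i - 1, by omega⟩
      exact (htauS i').2
    have hTAIL : G.sl (G.Vt j ρ (tau (i + 1))) ((G.Vt j ρ (tau i)).length)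
        ((G.Vt j ρ (tau (i + 1))).length - 1) = 0 := by
      apply G.sl_empty
      rw [hlenr, hlen']
      omega
    rw [hTAIL]
    simpa using hd

end ParityGame


/-- For a parity game with `n` states, `A^n_j(G) = A_j(G)`: the
states from which player `j` can ensure that the play begins with at least `n`
consecutive `j`-dominating sequences are exactly the winning core of player `j`. -/
theorem winCoreK_card_eq_winCore {S : Type} [Fintype S] (G : ParityGame S) (j : Fin 2) :
    G.WinCoreK j (Fintype.card S) = G.WinCore j := by
  apply Set.Subset.antisymm
  · exact G.winCoreK_subset_winCore j
  · rintro s ⟨σ, hσ, h⟩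
    refine ⟨σ, hσ, fun ρ h1 h2 h3 => ?_⟩
    obtain ⟨idx, hi0, hseg⟩ := h ρ h1 h2 h3
    exact ⟨idx, hi0, fun ℓ _ => hseg ℓ⟩
end

section
/- Let G = (S, S₀, S₁, R, c) be a parity game, j ∈ {0,1} a player, A' = Attr_j(G, A_j(G)) the attractor of the winning core of player j, and G' = G↾(S \ A'). Then W_j(G) = A' ∪ W_j(G') and W_{1−j}(G) = W_{1−j}(G'). -/
open ParityGame

namespace ParityGame

/-- Pigeonhole: a bounded function on an infinite set of naturals takes some value infinitely often. -/
lemma pigeon {L : Set ℕ} (hL : L.Infinite) (g : ℕ → ℕ) (B : ℕ) (hg : ∀ i, g i ≤ B) :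
    ∃ v ≤ B, {i | i ∈ L ∧ g i = v}.Infinite := by
  have : Infinite ↥L := hL.to_subtype
  obtain ⟨v, hv⟩ := Finite.exists_infinite_fiber
    (fun i : ↥L => (⟨g i, Nat.lt_succ_of_le (hg i)⟩ : Fin (B + 1)))
  refine ⟨v, Nat.lt_succ_iff.mp v.isLt, ?_⟩
  have h1 : ((fun i : ↥L => (⟨g i.1, Nat.lt_succ_of_le (hg i.1)⟩ : Fin (B+1))) ⁻¹' {v} : Set ↥L).Infinite :=
    Set.infinite_coe_iff.mp hv
  have h2 := h1.image (Set.injOn_of_injective Subtype.val_injective)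
  refine Set.Infinite.mono ?_ h2
  rintro x ⟨⟨i, hi⟩, hmem, rfl⟩
  simp only [Set.mem_preimage, Set.mem_singleton_iff] at hmem
  exact ⟨hi, by simpa [Fin.ext_iff] using congrArg Fin.val hmem⟩

lemma infOften_iff_infinite (π : ℕ → ℕ) (e : ℕ) :
    InfOften π e ↔ {i | π i = e}.Infinite := by
  constructor
  · intro h
    apply Set.infinite_of_forall_exists_gt
    intro a
    obtain ⟨i, hi, he⟩ := h (a + 1)
    exact ⟨i, he, by omega⟩
  · intro h n
    obtain ⟨i, hi, hlt⟩ := h.exists_gt n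
    exact ⟨i, le_of_lt hlt, hi⟩

/-- Existence of a maximal infinitely-often-occurring value for a bounded sequence. -/
lemma exists_max_infOften (π : ℕ → ℕ) (B : ℕ) (hB : ∀ i, π i ≤ B) :
    ∃ e, InfOften π e ∧ ∀ e', InfOften π e' → e' ≤ e := by
  classical
  obtain ⟨v, hvB, hv⟩ := pigeon Set.infinite_univ π B hB
  have hvIO : InfOften π v := (infOften_iff_infinite π v).mpr (by
    refine hv.mono ?_; intro x hx; exact hx.2)
  set E : Finset ℕ := (Finset.range (B + 1)).filter (fun e => InfOften π e) with hE
  have hvE : v ∈ E := by simp [hE, Nat.lt_succ_iff, hvB, hvIO]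
  have hne : E.Nonempty := ⟨v, hvE⟩
  refine ⟨E.max' hne, ?_, ?_⟩
  · have := E.max'_mem hne
    simp [hE] at this
    exact this.2
  · intro e' he'
    apply E.le_max' e'
    obtain ⟨i, _, hi⟩ := he' 0
    have he'B : e' ≤ B := hi ▸ hB i
    simp [hE, Nat.lt_succ_iff, he', he'B]

lemma infOften_shift_iff (π : ℕ → ℕ) (n e : ℕ) :
    InfOften (fun i => π (n + i)) e ↔ InfOften π e := by
  constructor
  · intro h m
    obtain ⟨i, hi, he⟩ := h m
    exact ⟨n + i, by omega, he⟩
  · intro h m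
    obtain ⟨i, hi, he⟩ := h (n + m)
    refine ⟨i - n, by omega, ?_⟩
    show π (n + (i - n)) = e
    rw [show n + (i - n) = i by omega]; exact he

lemma inOmega_shift_iff (j : Fin 2) (π : ℕ → ℕ) (n : ℕ) :
    InOmega j (fun i => π (n + i)) ↔ InOmega j π := by
  constructor
  · rintro ⟨⟨k, hk⟩, e, he, hmax, hpar⟩
    refine ⟨⟨max k ((Finset.range n).sup π), ?_⟩, e, (infOften_shift_iff π n e).mp he, ?_, hpar⟩
    · intro i
      rcases lt_or_ge i n with h | h
      · exact le_max_of_le_right (Finset.le_sup (Finset.mem_range.mpr h))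
      · have := hk (i - n)
        simp only [] at this
        rw [show n + (i - n) = i by omega] at this
        exact le_max_of_le_left this
    · intro e' he'
      exact hmax e' ((infOften_shift_iff π n e').mpr he')
  · rintro ⟨⟨k, hk⟩, e, he, hmax, hpar⟩
    refine ⟨⟨k, fun i => hk _⟩, e, (infOften_shift_iff π n e).mpr he, ?_, hpar⟩
    intro e' he'
    exact hmax e' ((infOften_shift_iff π n e').mp he')

section Plays

variable {S : Type}

/-- Auxiliary: iterate a stepping function, keeping track of the history. -/
def mkAux (step : List S → S → S) (s : S) : ℕ → List S × S
  | 0 => ([], s)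
  | n + 1 => ((mkAux step s n).1 ++ [(mkAux step s n).2], step (mkAux step s n).1 (mkAux step s n).2)

/-- The play built from a stepping function. -/
def mkPlay (step : List S → S → S) (s : S) (n : ℕ) : S := (mkAux step s n).2

lemma mkAux_fst (step : List S → S → S) (s : S) :
    ∀ n, (mkAux step s n).1 = List.ofFn (fun k : Fin n => mkPlay step s k) := by
  intro n
  induction n with
  | zero => simp [mkAux]
  | succ n ih =>
    rw [List.ofFn_succ']
    show (mkAux step s n).1 ++ [(mkAux step s n).2] = _
    rw [ih, List.concat_eq_append]
    congr 1

lemma mkPlay_zero (step : List S → S → S) (s : S) : mkPlay step s 0 = s := rfl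

lemma mkPlay_succ (step : List S → S → S) (s : S) (n : ℕ) :
    mkPlay step s (n + 1) = step (List.ofFn fun k : Fin n => mkPlay step s k) (mkPlay step s n) := by
  show (mkAux step s (n+1)).2 = _
  rw [show (mkAux step s (n+1)).2 = step (mkAux step s n).1 (mkAux step s n).2 from rfl, mkAux_fst]
  rfl

variable (G : ParityGame S)

lemma exists_play (t : S) : ∃ ρ, G.IsPlay ρ ∧ ρ 0 = t := by
  classical
  refine ⟨mkPlay (fun _ c => (G.total c).choose) t, fun i => ?_, rfl⟩
  rw [mkPlay_succ]
  exact (G.total _).choose_spec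

lemma winRegion_disjoint (j : Fin 2) (s : S)
    (h0 : s ∈ G.WinRegion j) (h1 : s ∈ G.WinRegion (1 - j)) : False := by
  obtain ⟨σ0, hσ0, hw0⟩ := h0
  obtain ⟨σ1, hσ1, hw1⟩ := h1
  set step : List S → S → S := fun h c => if G.owner c = j then σ0 h c else σ1 h c with hstep
  set ρ := mkPlay step s with hρ
  have hplay : G.IsPlay ρ := by
    intro i
    rw [hρ, mkPlay_succ]
    show G.R (ρ i) (step _ (ρ i))
    by_cases h : G.owner (ρ i) = j <;> simp [hstep, h, hσ0 _ _, hσ1 _ _]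
  have hneAll : ∀ a : Fin 2, (1 - a : Fin 2) ≠ a := by decide
  have hne : (1 - j : Fin 2) ≠ j := hneAll j
  have comp0 : G.Compatible j σ0 ρ := by
    intro i hi
    rw [hρ, mkPlay_succ]
    show step _ (ρ i) = _
    simp [hstep, hi]
    rfl
  have comp1 : G.Compatible (1 - j) σ1 ρ := by
    intro i hi
    rw [hρ, mkPlay_succ]
    show step _ (ρ i) = _
    have : G.owner (ρ i) ≠ j := by rw [hi]; exact hne
    simp [hstep, this]
    rfl
  obtain ⟨_, e, he, hmax, hpar⟩ := hw0 ρ hplay rfl comp0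
  obtain ⟨_, e', he', hmax', hpar'⟩ := hw1 ρ hplay rfl comp1
  have : e = e' := le_antisymm (hmax' e he) (hmax e' he')
  have hval : (j : ℕ) = ((1 - j : Fin 2) : ℕ) := by rw [← hpar, ← hpar', this]
  have : ∀ a : Fin 2, (a : ℕ) = ((1 - a : Fin 2) : ℕ) → False := by decide
  exact this j hval

/-- Closure of winning under a strategy: any state reached by a finite history
compatible with a winning strategy is itself winning. -/
lemma mem_winRegion_of_prefix_compatible (p : Fin 2) (σ : List S → S → S)
    (hσ : G.IsStrategy σ) (s : S)
    (hwin : ∀ ρ, G.IsPlay ρ → ρ 0 = s → G.Compatible p σ ρ → InOmega p (G.colorSeq ρ))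
    (ρ : ℕ → S) (hρ : G.IsPlay ρ) (hρ0 : ρ 0 = s) (n : ℕ)
    (hpre : ∀ k < n, G.owner (ρ k) = p → ρ (k + 1) = σ (List.ofFn fun i : Fin k => ρ i) (ρ k)) :
    ρ n ∈ G.WinRegion p := by
  refine ⟨fun h' t => σ ((List.ofFn fun k : Fin n => ρ k) ++ h') t, fun h t => hσ _ t, ?_⟩
  intro ρ' hρ' hρ'0 hρ'c
  set ρ'' : ℕ → S := fun i => if i < n then ρ i else ρ' (i - n) with hρ''
  have f1 : ∀ k ≤ n, ρ'' k = ρ k := by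
    intro k hk
    rcases lt_or_eq_of_le hk with h | h
    · simp [hρ'', h]
    · subst h; simp [hρ'', hρ'0]
  have f2 : ∀ m, ρ'' (n + m) = ρ' m := by
    intro m
    simp [hρ'', Nat.not_lt.mpr (Nat.le_add_right n m)]
  have hplay'' : G.IsPlay ρ'' := by
    intro i
    rcases Nat.lt_or_ge i n with h | h
    · rw [f1 i h.le, f1 (i+1) (by omega)]; exact hρ i
    · have e1 : ρ'' i = ρ' (i - n) := by
        have := f2 (i - n); rwa [show n + (i - n) = i by omega] at this
      have e2 : ρ'' (i + 1) = ρ' (i - n + 1) := by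
        have := f2 (i - n + 1); rwa [show n + (i - n + 1) = i + 1 by omega] at this
      rw [e1, e2]; exact hρ' (i - n)
  have f3 : ∀ m, (List.ofFn fun k : Fin (n + m) => ρ'' k) =
      (List.ofFn fun k : Fin n => ρ k) ++ (List.ofFn fun k : Fin m => ρ' k) := by
    intro m
    apply List.ext_getElem
    · simp
    · intro q h1 h2
      rcases Nat.lt_or_ge q n with h | h
      · rw [List.getElem_append_left (by simpa using h)]
        simp only [List.getElem_ofFn]
        exact f1 q h.le
      · rw [List.getElem_append_right (by simpa using h)]
        simp only [List.getElem_ofFn, List.length_ofFn]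
        have := f2 (q - n); rw [show n + (q - n) = q by omega] at this; exact this
  have compat'' : G.Compatible p σ ρ'' := by
    intro i hown
    rcases Nat.lt_or_ge i n with h | h
    · have hfe : (fun k : Fin i => ρ'' k) = fun k : Fin i => ρ k :=
        funext fun k => f1 k (by omega)
      rw [f1 (i+1) (by omega), hfe]
      rw [f1 i h.le] at hown ⊢
      exact hpre i h hown
    · set m := i - n with hm
      have hi : i = n + m := by omega
      have hown' : G.owner (ρ' m) = p := by rw [← f2 m, ← hi]; exact hown
      have := hρ'c m hown'
      rw [show i + 1 = n + (m + 1) by omega, f2, hi, f3, f2]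
      exact this
  have hO := hwin ρ'' hplay'' (by rw [f1 0 (Nat.zero_le n), hρ0]) compat''
  have hcs : G.colorSeq ρ' = fun i => G.colorSeq ρ'' (n + i) := by
    funext i
    simp [colorSeq, f2]
  rw [hcs]
  exact (inOmega_shift_iff p (G.colorSeq ρ'') n).mpr hO

end Plays


section Switch

variable {S : Type} (G : ParityGame S)

open Classical in
/-- A winning strategy for `j` from `t`, if one exists (else a default strategy). -/
noncomputable def winStratOf (j : Fin 2) (σdef : List S → S → S) (t : S) : List S → S → S :=
  if ht : t ∈ G.WinRegion j then ht.choose else σdef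

lemma winStratOf_isStrategy (j : Fin 2) (σdef : List S → S → S) (hσ : G.IsStrategy σdef)
    (t : S) : G.IsStrategy (G.winStratOf j σdef t) := by
  unfold winStratOf
  split
  · next ht => exact ht.choose_spec.1
  · exact hσ

lemma winStratOf_winning (j : Fin 2) (σdef : List S → S → S) {t : S}
    (ht : t ∈ G.WinRegion j) :
    ∀ ρ, G.IsPlay ρ → ρ 0 = t → G.Compatible j (G.winStratOf j σdef t) ρ →
      InOmega j (G.colorSeq ρ) := by
  unfold winStratOf
  rw [dif_pos ht]
  exact ht.choose_spec.2

open Classical in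
/-- The strategy that plays `σ₀` until the play first hits `Y`, then switches to a
winning strategy of the entry state. -/
noncomputable def switchStrat (j : Fin 2) (Y : Set S) (σ₀ : List S → S → S) :
    List S → S → S := fun h cur =>
  if hex : ∃ k, ∃ hk : k < (h ++ [cur]).length, (h ++ [cur])[k]'hk ∈ Y then
    G.winStratOf j σ₀ ((h ++ [cur])[Nat.find hex]'(Nat.find_spec hex).choose)
      (h.drop (Nat.find hex)) cur
  else σ₀ h cur

lemma switchStrat_isStrategy (j : Fin 2) (Y : Set S) (σ₀ : List S → S → S)
    (hσ₀ : G.IsStrategy σ₀) : G.IsStrategy (G.switchStrat j Y σ₀) := by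
  intro h s
  unfold switchStrat
  split
  · exact G.winStratOf_isStrategy j σ₀ hσ₀ _ _ _
  · exact hσ₀ h s

private lemma hist_concat (ρ : ℕ → S) (i : ℕ) :
    (List.ofFn fun k : Fin i => ρ k) ++ [ρ i] = List.ofFn (fun k : Fin (i + 1) => ρ k) := by
  rw [List.ofFn_succ', List.concat_eq_append]
  rfl

private lemma hist_drop (ρ : ℕ → S) (i p : ℕ) (hp : p ≤ i) :
    (List.ofFn fun k : Fin i => ρ k).drop p = List.ofFn (fun k : Fin (i - p) => ρ (p + k)) := by
  apply List.ext_getElem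
  · simp
  · intro q h1 h2
    rw [List.getElem_drop]
    simp only [List.getElem_ofFn]

/-- Key composition lemma: if a strategy `σ₀` wins all plays from `s` that avoid `Y`,
and every state of `Y` is winning, then `s` is winning. -/
lemma mem_winRegion_switch (j : Fin 2) (Y : Set S) (hY : Y ⊆ G.WinRegion j) (s : S)
    (σ₀ : List S → S → S) (hσ₀ : G.IsStrategy σ₀)
    (hwin : ∀ ρ, G.IsPlay ρ → ρ 0 = s → G.Compatible j σ₀ ρ → (∀ i, ρ i ∉ Y) →
      InOmega j (G.colorSeq ρ)) :
    s ∈ G.WinRegion j := by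
  classical
  refine ⟨G.switchStrat j Y σ₀, G.switchStrat_isStrategy j Y σ₀ hσ₀, ?_⟩
  intro ρ hρ hρ0 hcomp
  have hget : ∀ i k (hk : k < ((List.ofFn fun m : Fin i => ρ m) ++ [ρ i]).length),
      ((List.ofFn fun m : Fin i => ρ m) ++ [ρ i])[k]'hk = ρ k := by
    intro i k hk
    have hlen : ((List.ofFn fun m : Fin i => ρ m) ++ [ρ i]).length = i + 1 := by simp
    have hk' : k < i + 1 := hlen ▸ hk
    rcases Nat.lt_or_ge k i with h | h
    · rw [List.getElem_append_left (by simpa using h)]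
      simp only [List.getElem_ofFn]
    · have hki : k = i := by omega
      subst hki
      rw [List.getElem_append_right (by simp)]
      simp
  by_cases hA : ∀ i, ρ i ∉ Y
  · refine hwin ρ hρ hρ0 ?_ hA
    intro i hown
    have := hcomp i hown
    rw [this]
    unfold switchStrat
    rw [dif_neg]
    rintro ⟨k, hk, hmem⟩
    rw [hget i k hk] at hmem
    exact hA k hmem
  · push_neg at hA
    have hp := Nat.find_spec hA
    set p := Nat.find hA with hpdef
    have hmin : ∀ q < p, ρ q ∉ Y := fun q hq => Nat.find_min hA hq
    have ht : ρ p ∈ G.WinRegion j := hY hp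
    set ρ' : ℕ → S := fun k => ρ (p + k) with hρ'
    have hρ'play : G.IsPlay ρ' := fun i => by
      show G.R (ρ (p + i)) (ρ (p + (i + 1)))
      rw [show p + (i + 1) = (p + i) + 1 by omega]
      exact hρ (p + i)
    have hcompat' : G.Compatible j (G.winStratOf j σ₀ (ρ p)) ρ' := by
      intro m hown
      have hown2 : G.owner (ρ (p + m)) = j := hown
      have hcc := hcomp (p + m) hown2
      -- evaluate the switch strategy
      have hlen : ((List.ofFn fun k : Fin (p + m) => ρ k) ++ [ρ (p + m)]).length = p + m + 1 := by
        simp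
      have hex : ∃ k, ∃ hk : k < ((List.ofFn fun k : Fin (p + m) => ρ k) ++ [ρ (p + m)]).length,
          ((List.ofFn fun k : Fin (p + m) => ρ k) ++ [ρ (p + m)])[k]'hk ∈ Y := by
        refine ⟨p, ?_⟩
        have hk : p < ((List.ofFn fun k : Fin (p + m) => ρ k) ++ [ρ (p + m)]).length := by omega
        exact ⟨hk, by rw [hget (p + m) p hk]; exact hp⟩
      show ρ (p + (m + 1)) = _
      rw [show p + (m + 1) = p + m + 1 by omega, hcc]
      unfold switchStrat
      rw [dif_pos hex]
      have hfp : Nat.find hex = p := by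
        apply le_antisymm
        · obtain ⟨hk, hmem⟩ := hex.choose_spec
          exact Nat.find_min' hex ⟨(by omega : p < _), by rw [hget (p + m) p (by omega)]; exact hp⟩
        · by_contra hcon
          push_neg at hcon
          obtain ⟨hk2, hmem2⟩ := Nat.find_spec hex
          rw [hget (p + m) _ hk2] at hmem2
          exact hmin _ hcon hmem2
      have hgetfind : ∀ (hh : Nat.find hex < ((List.ofFn fun k : Fin (p + m) => ρ k) ++ [ρ (p + m)]).length),
          ((List.ofFn fun k : Fin (p + m) => ρ k) ++ [ρ (p + m)])[Nat.find hex]'hh = ρ p := by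
        intro hh
        rw [hget (p + m) _ hh, hfp]
      rw [hgetfind, hfp, hist_drop ρ (p + m) p (by omega)]
      simp only [show p + m - p = m from by omega]
      rfl
    have hω' := G.winStratOf_winning j σ₀ ht ρ' hρ'play (by show ρ (p + 0) = ρ p; rw [Nat.add_zero]) hcompat'
    have : G.colorSeq ρ' = fun k => G.colorSeq ρ (p + k) := rfl
    rw [this] at hω'
    exact (inOmega_shift_iff j (G.colorSeq ρ) p).mp hω'

end Switch


section Attr

variable {S : Type} (G : ParityGame S)

/-- Finite approximations of the attractor. -/
def attrApprox (j : Fin 2) (T : Set S) : ℕ → Set S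
  | 0 => T
  | n + 1 => attrApprox j T n ∪ {s | G.owner s = j ∧ ∃ t ∈ attrApprox j T n, G.R s t}
      ∪ {s | G.owner s ≠ j ∧ ∀ t, G.R s t → t ∈ attrApprox j T n}

lemma attrApprox_mono (j : Fin 2) (T : Set S) {m n : ℕ} (h : m ≤ n) :
    G.attrApprox j T m ⊆ G.attrApprox j T n := by
  induction n with
  | zero => rw [Nat.le_zero.mp h]
  | succ n ih =>
    rcases Nat.lt_or_ge m (n + 1) with h' | h'
    · exact fun s hs => Or.inl (Or.inl (ih (by omega) hs))
    · rw [show m = n + 1 by omega]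

lemma attrApprox_subset_attractor (j : Fin 2) (T : Set S) :
    ∀ n, G.attrApprox j T n ⊆ G.attractor j T := by
  intro n
  induction n with
  | zero => exact fun s hs => AttrRel.base hs
  | succ n ih =>
    rintro s ((hs | ⟨hown, t, htA, hRt⟩) | ⟨hown, hall⟩)
    · exact ih hs
    · exact AttrRel.own hown hRt (ih htA)
    · exact AttrRel.opp hown fun t ht => ih (hall t ht)

open Classical in
/-- Rank of a state in the attractor. -/
noncomputable def attrRank (j : Fin 2) (T : Set S) (s : S) : ℕ :=
  if h : ∃ n, s ∈ G.attrApprox j T n then Nat.find h else 0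


lemma attrRank_le (j : Fin 2) (T : Set S) {s : S} {n : ℕ} (h : s ∈ G.attrApprox j T n) :
    G.attrRank j T s ≤ n := by
  classical
  unfold attrRank
  rw [dif_pos ⟨n, h⟩]
  exact Nat.find_min' _ h

lemma attrRank_spec (j : Fin 2) (T : Set S) {s : S} (h : ∃ n, s ∈ G.attrApprox j T n) :
    s ∈ G.attrApprox j T (G.attrRank j T s) := by
  classical
  unfold attrRank
  rw [dif_pos h]
  exact Nat.find_spec h

lemma attrRank_min (j : Fin 2) (T : Set S) {s : S} (h : ∃ n, s ∈ G.attrApprox j T n)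
    {m : ℕ} (hm : m < G.attrRank j T s) : s ∉ G.attrApprox j T m := by
  classical
  unfold attrRank at hm
  rw [dif_pos h] at hm
  exact Nat.find_min h hm


lemma attractor_subset_iUnion [Fintype S] (j : Fin 2) (T : Set S) {s : S}
    (hs : s ∈ G.attractor j T) : ∃ n, s ∈ G.attrApprox j T n := by
  classical
  induction hs with
  | base h => exact ⟨0, h⟩
  | own hown hR _ ih =>
    obtain ⟨n, hn⟩ := ih
    exact ⟨n + 1, Or.inl (Or.inr ⟨hown, _, hn, hR⟩)⟩
  | opp hown hall ih =>
    refine ⟨Finset.univ.sup (G.attrRank j T) + 1, Or.inr ⟨hown, fun t ht => ?_⟩⟩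
    obtain ⟨n, hn⟩ := ih t ht
    have hgt : t ∈ G.attrApprox j T (G.attrRank j T t) := G.attrRank_spec j T ⟨n, hn⟩
    exact G.attrApprox_mono j T (Finset.le_sup (Finset.mem_univ t)) hgt

open Classical in
/-- A memoryless attractor strategy. -/
noncomputable def attrStrat (j : Fin 2) (T : Set S) : List S → S → S := fun _ cur =>
  if hc : ∃ t, G.R cur t ∧ (∃ n, t ∈ G.attrApprox j T n) ∧ G.attrRank j T t < G.attrRank j T cur
  then hc.choose else (G.total cur).choose

lemma attrStrat_isStrategy (j : Fin 2) (T : Set S) : G.IsStrategy (G.attrStrat j T) := by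
  intro h s
  unfold attrStrat
  split
  · next hc => exact hc.choose_spec.1
  · exact (G.total s).choose_spec

lemma attrStrat_memoryless (j : Fin 2) (T : Set S) (h h' : List S) (cur : S) :
    G.attrStrat j T h cur = G.attrStrat j T h' cur := rfl

/-- The attractor strategy forces reaching the target. -/
lemma attrStrat_reaches (j : Fin 2) (T : Set S) :
    ∀ r : ℕ, ∀ s : S, (∃ n, s ∈ G.attrApprox j T n) → G.attrRank j T s ≤ r →
    ∀ ρ, G.IsPlay ρ → ρ 0 = s → G.Compatible j (G.attrStrat j T) ρ → ∃ k, ρ k ∈ T := by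
  intro r
  induction r with
  | zero =>
    intro s hex hr ρ hρ hρ0 hc
    have h0 : G.attrRank j T s = 0 := Nat.le_zero.mp hr
    have := G.attrRank_spec j T hex
    rw [h0] at this
    exact ⟨0, hρ0 ▸ this⟩
  | succ r ih =>
    intro s hex hr ρ hρ hρ0 hc
    by_cases hT : s ∈ T
    · exact ⟨0, hρ0 ▸ hT⟩
    · have hsA := G.attrRank_spec j T hex
      have hpos : G.attrRank j T s ≠ 0 := by
        intro h0
        rw [h0] at hsA
        exact hT hsA
      set m := G.attrRank j T s - 1 with hm
      have hrsm : G.attrRank j T s = m + 1 := by omega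
      have hnot : s ∉ G.attrApprox j T m := G.attrRank_min j T hex (by omega)
      rw [hrsm] at hsA
      -- tail play
      have htail : ∀ (t : S), ρ 1 = t → (∃ n, t ∈ G.attrApprox j T n) → G.attrRank j T t ≤ r →
          ∃ k, ρ k ∈ T := by
        intro t h1 hex' hr'
        have hplay' : G.IsPlay (fun k => ρ (k + 1)) := fun i => hρ (i + 1)
        have hcomp' : G.Compatible j (G.attrStrat j T) (fun k => ρ (k + 1)) := by
          intro i hown
          exact hc (i + 1) hown
        obtain ⟨k, hk⟩ := ih t hex' hr' _ hplay' h1 hcomp'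
        exact ⟨k + 1, hk⟩
      rcases hsA with (hs | ⟨hown, t, htA, hRt⟩) | ⟨hown, hall⟩
      · exact absurd hs hnot
      · -- player j moves down in rank
        have hcond : ∃ t, G.R s t ∧ (∃ n, t ∈ G.attrApprox j T n) ∧
            G.attrRank j T t < G.attrRank j T s := by
          refine ⟨t, hRt, ⟨m, htA⟩, ?_⟩
          have := G.attrRank_le j T htA
          omega
        have hstep : ρ 1 = G.attrStrat j T (List.ofFn fun k : Fin 0 => ρ k) (ρ 0) :=
          hc 0 (by rw [hρ0]; exact hown)
        have hval : ρ 1 = hcond.choose := by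
          rw [hstep, hρ0]
          unfold attrStrat
          rw [dif_pos hcond]
        obtain ⟨hR', hex', hlt⟩ := hcond.choose_spec
        exact htail _ hval hex' (by omega)
      · -- opponent: every successor has smaller rank
        have h1A : ρ 1 ∈ G.attrApprox j T m := hall _ (by rw [← hρ0]; exact hρ 0)
        exact htail (ρ 1) rfl ⟨m, h1A⟩ (by have := G.attrRank_le j T h1A; omega)

/-- The attractor of a subset of the winning region is contained in the winning region. -/
lemma attractor_subset_winRegion [Fintype S] (j : Fin 2) (Y : Set S)
    (hY : Y ⊆ G.WinRegion j) : G.attractor j Y ⊆ G.WinRegion j := by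
  intro s hs
  refine G.mem_winRegion_switch j Y hY s (G.attrStrat j Y) (G.attrStrat_isStrategy j Y) ?_
  intro ρ hρ hρ0 hcomp havoid
  obtain ⟨n, hn⟩ := G.attractor_subset_iUnion j Y hs
  obtain ⟨k, hk⟩ := G.attrStrat_reaches j Y (G.attrRank j Y s) s ⟨n, hn⟩ le_rfl ρ hρ hρ0 hcomp
  exact absurd hk (havoid k)

end Attr

/-- The key combinatorial lemma: a bounded sequence that decomposes into infinitely many
consecutive `j`-dominating segments is in `Ω_j`. -/
lemma inOmega_of_infDomSeg (j : Fin 2) (π : ℕ → ℕ) (B : ℕ) (hB : ∀ i, π i ≤ B)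
    (idx : ℕ → ℕ) (h0 : idx 0 = 0)
    (hseg : ∀ ℓ, idx ℓ < idx (ℓ + 1) ∧ ((Finset.Icc (idx ℓ + 1) (idx (ℓ + 1))).sup π) % 2 = (j : ℕ)) :
    InOmega j π := by
  classical
  have hmono : StrictMono idx := strictMono_nat_of_lt_succ fun ℓ => (hseg ℓ).1
  set g : ℕ → ℕ := fun ℓ => (Finset.Icc (idx ℓ + 1) (idx (ℓ + 1))).sup π with hg
  have hgB : ∀ ℓ, g ℓ ≤ B := fun ℓ => Finset.sup_le fun k _ => hB k
  have hcov : ∀ i, 1 ≤ i → ∃ ℓ, idx ℓ < i ∧ i ≤ idx (ℓ + 1) := by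
    intro i hi
    have hex : ∃ ℓ, i ≤ idx (ℓ + 1) := ⟨i, le_trans (hmono.le_apply) (le_of_lt (hmono (Nat.lt_succ_self i)))⟩
    refine ⟨Nat.find hex, ?_, Nat.find_spec hex⟩
    rcases Nat.eq_zero_or_pos (Nat.find hex) with h | h
    · rw [h, h0]; omega
    · have := Nat.find_min hex (Nat.sub_lt h Nat.one_pos)
      push_neg at this
      rwa [show Nat.find hex - 1 + 1 = Nat.find hex by omega] at this
  obtain ⟨e, heIO, hemax⟩ := exists_max_infOften π B hB
  -- the set of segments whose max is ≥ e is infinite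
  have hL : {ℓ | e ≤ g ℓ}.Infinite := by
    apply Set.infinite_of_forall_exists_gt
    intro a
    obtain ⟨i, hi, hie⟩ := heIO (idx (a + 1) + 1)
    obtain ⟨ℓ, hℓ1, hℓ2⟩ := hcov i (by omega)
    refine ⟨ℓ, ?_, ?_⟩
    · have : π i ≤ g ℓ := Finset.le_sup (Finset.mem_Icc.mpr ⟨by omega, hℓ2⟩)
      simpa [hie] using this
    · by_contra hcon
      push_neg at hcon
      have : idx (ℓ + 1) ≤ idx (a + 1) := hmono.monotone (by omega)
      omega
  obtain ⟨v, hvB, hv⟩ := pigeon hL g B hgB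
  have hvnon : ∃ ℓ, ℓ ∈ {ℓ | e ≤ g ℓ} ∧ g ℓ = v := by
    obtain ⟨ℓ, hℓ, _⟩ := hv.exists_gt 0
    exact ⟨ℓ, hℓ.1, hℓ.2⟩
  obtain ⟨ℓ₀, hℓ₀L, hℓ₀v⟩ := hvnon
  have hev : e ≤ v := hℓ₀v ▸ hℓ₀L
  -- v occurs infinitely often in π
  have hvIO : InfOften π v := by
    intro m
    obtain ⟨ℓ, hℓ, hℓm⟩ := hv.exists_gt m
    have hne : (Finset.Icc (idx ℓ + 1) (idx (ℓ + 1))).Nonempty :=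
      Finset.nonempty_Icc.mpr (by have := (hseg ℓ).1; omega)
    obtain ⟨k, hk, hks⟩ := Finset.exists_mem_eq_sup _ hne π
    have hgk : π k = g ℓ := hks.symm
    refine ⟨k, ?_, by rw [hgk]; exact hℓ.2⟩
    have : idx ℓ + 1 ≤ k := (Finset.mem_Icc.mp hk).1
    have : ℓ ≤ idx ℓ := hmono.le_apply
    omega
  have hve : v = e := le_antisymm (hemax v hvIO) hev
  exact ⟨⟨B, hB⟩, e, heIO, hemax, by rw [← hve, ← hℓ₀v]; exact (hseg ℓ₀).2⟩

end ParityGame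


namespace ParityGame

section Restrict

variable {S : Type} (G : ParityGame S)

lemma winCore_subset_winRegion [Fintype S] (j : Fin 2) :
    G.WinCore j ⊆ G.WinRegion j := by
  rintro s ⟨σ, hσ, h⟩
  refine ⟨σ, hσ, fun ρ hρ h0 hc => ?_⟩
  obtain ⟨idx, hidx0, hseg⟩ := h ρ hρ h0 hc
  exact inOmega_of_infDomSeg j (G.colorSeq ρ) (Finset.univ.sup G.c)
    (fun i => Finset.le_sup (Finset.mem_univ (ρ i))) idx hidx0
    (fun ℓ => ⟨(hseg ℓ).1, (hseg ℓ).2⟩)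

lemma attachWith_ofFn {α : Type*} {P : α → Prop} {n : ℕ} (f : Fin n → α)
    (H : ∀ x ∈ List.ofFn f, P x) (g : Fin n → {x // P x}) (hg : ∀ k, (g k).val = f k) :
    (List.ofFn f).attachWith P H = List.ofFn g := by
  apply List.ext_getElem
  · simp
  · intro q h1 h2
    rw [List.getElem_attachWith]
    refine Subtype.ext ?_
    simp [List.getElem_ofFn, hg]

/-- Restriction of a winning strategy to the complement of the attractor. -/
lemma mem_winRegion_restrict (p : Fin 2) (A' : Set S)
    (htot : ∀ s : ↥A'ᶜ, ∃ t : ↥A'ᶜ, G.R s.1 t.1)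
    (s : S) (hsA : s ∈ A'ᶜ) (σ : List S → S → S) (hσ : G.IsStrategy σ)
    (hwin : ∀ ρ, G.IsPlay ρ → ρ 0 = s → G.Compatible p σ ρ → InOmega p (G.colorSeq ρ))
    (Hstay : ∀ ρ n, G.IsPlay ρ → ρ 0 = s →
      (∀ k < n, G.owner (ρ k) = p → ρ (k + 1) = σ (List.ofFn fun i : Fin k => ρ i) (ρ k)) →
      (∀ k, k ≤ n → ρ k ∈ A'ᶜ) → G.owner (ρ n) = p →
      σ (List.ofFn fun i : Fin n => ρ i) (ρ n) ∈ A'ᶜ) :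
    (⟨s, hsA⟩ : ↥A'ᶜ) ∈ ((G.restrict A'ᶜ htot).WinRegion p) := by
  classical
  refine ⟨fun h' t => if hmem : σ (h'.map Subtype.val) t.val ∈ A'ᶜ then ⟨_, hmem⟩
    else (htot t).choose, ?_, ?_⟩
  · intro h t
    dsimp only
    split
    · exact hσ _ _
    · exact (htot t).choose_spec
  · intro π hπ hπ0 hπc
    set ρ : ℕ → S := fun i => (π i).val with hρdef
    have hρplay : G.IsPlay ρ := fun i => hπ i
    have hρ0 : ρ 0 = s := by rw [hρdef]; exact congrArg Subtype.val hπ0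
    have hmap : ∀ i, (List.ofFn fun k : Fin i => π k).map Subtype.val
        = (List.ofFn fun k : Fin i => ρ k) := by
      intro i; rw [List.map_ofFn]; rfl
    have hpre : ∀ n, ∀ k < n, G.owner (ρ k) = p →
        ρ (k + 1) = σ (List.ofFn fun i : Fin k => ρ i) (ρ k) := by
      intro n
      induction n with
      | zero => exact fun k hk => absurd hk (Nat.not_lt_zero k)
      | succ n ih =>
        intro k hk hown
        rcases Nat.lt_or_ge k n with h | h
        · exact ih k h hown
        · have hkn : k = n := by omega
          subst hkn
          have hstay := Hstay ρ k hρplay hρ0 (fun m hm => ih m hm) (fun m _ => (π m).2) hown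
          have hπc' := hπc k hown
          show (π (k + 1)).val = _
          rw [hπc']
          have hcond : σ ((List.ofFn fun i : Fin k => π i).map Subtype.val) (π k).val ∈ A'ᶜ := by
            rw [hmap]; exact hstay
          dsimp only
          rw [dif_pos hcond]
          show σ ((List.ofFn fun i : Fin k => π i).map Subtype.val) (π k).val = _
          rw [hmap]
    have hcomp : G.Compatible p σ ρ := fun i hown => hpre (i + 1) i (Nat.lt_succ_self i) hown
    exact hwin ρ hρplay hρ0 hcomp

open Classical in
/-- Extension of a strategy of the restricted game to the full game. -/
noncomputable def extendStrat (A' : Set S) (σ' : List ↥A'ᶜ → ↥A'ᶜ → ↥A'ᶜ) :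
    List S → S → S := fun h t =>
  if hc : (t ∈ A'ᶜ) ∧ ∀ x ∈ h, x ∈ A'ᶜ then
    (σ' (h.attachWith (· ∈ A'ᶜ) hc.2) ⟨t, hc.1⟩).val
  else (G.total t).choose

lemma extendStrat_isStrategy (A' : Set S) (htot : ∀ s : ↥A'ᶜ, ∃ t : ↥A'ᶜ, G.R s.1 t.1)
    (σ' : List ↥A'ᶜ → ↥A'ᶜ → ↥A'ᶜ) (hσ' : (G.restrict A'ᶜ htot).IsStrategy σ') :
    G.IsStrategy (G.extendStrat A' σ') := by
  intro h t
  unfold extendStrat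
  split
  · next hc => exact hσ' (h.attachWith (· ∈ A'ᶜ) hc.2) ⟨t, hc.1⟩
  · exact (G.total t).choose_spec

/-- A play compatible with the extended strategy and staying in `A'ᶜ` projects to a
compatible play of the restricted game. -/
lemma extendStrat_compat (A' : Set S) (htot : ∀ s : ↥A'ᶜ, ∃ t : ↥A'ᶜ, G.R s.1 t.1)
    (σ' : List ↥A'ᶜ → ↥A'ᶜ → ↥A'ᶜ) (p : Fin 2) (ρ : ℕ → S) (hall : ∀ i, ρ i ∈ A'ᶜ)
    (hρ : G.IsPlay ρ) (hcomp : G.Compatible p (G.extendStrat A' σ') ρ) :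
    (G.restrict A'ᶜ htot).IsPlay (fun i => ⟨ρ i, hall i⟩) ∧
    (G.restrict A'ᶜ htot).Compatible p σ' (fun i => ⟨ρ i, hall i⟩) := by
  refine ⟨fun i => hρ i, ?_⟩
  intro i hown
  have hcc := hcomp i hown
  have hc : (ρ i ∈ A'ᶜ) ∧ ∀ x ∈ (List.ofFn fun k : Fin i => ρ k), x ∈ A'ᶜ := by
    refine ⟨hall i, ?_⟩
    intro x hx
    rw [List.mem_ofFn] at hx
    obtain ⟨k, rfl⟩ := hx
    exact hall k
  apply Subtype.ext
  show ρ (i + 1) = _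
  rw [hcc]
  unfold extendStrat
  rw [dif_pos hc,
    attachWith_ofFn (fun k : Fin i => ρ k) hc.2 (fun k : Fin i => (⟨ρ k, hall k⟩ : ↥A'ᶜ))
      (fun k => rfl)]

/-- Extension of a winning strategy, when the opponent cannot leave `A'ᶜ`. -/
lemma extend_winning (p : Fin 2) (A' : Set S) (htot : ∀ s : ↥A'ᶜ, ∃ t : ↥A'ᶜ, G.R s.1 t.1)
    (hstayopp : ∀ s, s ∈ A'ᶜ → G.owner s ≠ p → ∀ t, G.R s t → t ∈ A'ᶜ)
    (s : ↥A'ᶜ) (hs : s ∈ (G.restrict A'ᶜ htot).WinRegion p) : s.val ∈ G.WinRegion p := by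
  obtain ⟨σ', hσ', hw⟩ := hs
  refine ⟨G.extendStrat A' σ', G.extendStrat_isStrategy A' htot σ' hσ', ?_⟩
  intro ρ hρ hρ0 hcomp
  have hallLe : ∀ i, ∀ k, k ≤ i → ρ k ∈ A'ᶜ := by
    intro i
    induction i with
    | zero => intro k hk; rw [Nat.le_zero.mp hk, hρ0]; exact s.2
    | succ i ih =>
      intro k hk
      rcases Nat.lt_or_ge k (i + 1) with h | h
      · exact ih k (by omega)
      · have hki : k = i + 1 := by omega
        subst hki
        by_cases hown : G.owner (ρ i) = p
        · have hcc := hcomp i hown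
          have hc : (ρ i ∈ A'ᶜ) ∧ ∀ x ∈ (List.ofFn fun k : Fin i => ρ k), x ∈ A'ᶜ := by
            refine ⟨ih i le_rfl, ?_⟩
            intro x hx
            rw [List.mem_ofFn] at hx
            obtain ⟨m, rfl⟩ := hx
            exact ih m (le_of_lt m.isLt)
          rw [hcc]
          unfold extendStrat
          rw [dif_pos hc]
          exact (σ' _ _).2
        · exact hstayopp (ρ i) (ih i le_rfl) hown _ (hρ i)
  have hall : ∀ i, ρ i ∈ A'ᶜ := fun i => hallLe i i le_rfl
  obtain ⟨hπ, hπc⟩ := G.extendStrat_compat A' htot σ' p ρ hall hρ hcomp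
  exact hw _ hπ (Subtype.ext hρ0) hπc

end Restrict

end ParityGame

/-- Let `A' = Attr_j(G, A_j(G))` and `G' = G ↾ (S \\ A')` (whose
transition relation is assumed total). Then `W_j(G) = A' ∪ W_j(G')` and
`W_{1-j}(G) = W_{1-j}(G')`. -/
theorem winRegion_decomposition_by_core_attractor {S : Type} [Fintype S]
    (G : ParityGame S) (j : Fin 2)
    (A' : Set S) (hA' : A' = G.attractor j (G.WinCore j))
    (htot : ∀ s : ↥A'ᶜ, ∃ t : ↥A'ᶜ, G.R s.1 t.1) :
    G.WinRegion j = A' ∪ Subtype.val '' ((G.restrict A'ᶜ htot).WinRegion j) ∧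
    G.WinRegion (1 - j) = Subtype.val '' ((G.restrict A'ᶜ htot).WinRegion (1 - j)) := by
  classical
  have hcoreW : G.WinCore j ⊆ G.WinRegion j := G.winCore_subset_winRegion j
  have hA'W : A' ⊆ G.WinRegion j := by
    rw [hA']; exact G.attractor_subset_winRegion j _ hcoreW
  have hstayj : ∀ s, s ∈ A'ᶜ → G.owner s = j → ∀ t, G.R s t → t ∈ A'ᶜ := by
    intro s hs hown t hR ht
    apply hs
    rw [hA'] at ht ⊢
    exact ParityGame.AttrRel.own hown hR ht
  constructor
  · apply Set.Subset.antisymm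
    · intro s hs
      by_cases hA : s ∈ A'
      · exact Or.inl hA
      · obtain ⟨σ, hσ, hw⟩ := hs
        refine Or.inr ⟨⟨s, hA⟩, ?_, rfl⟩
        refine G.mem_winRegion_restrict j A' htot s hA σ hσ hw ?_
        intro ρ n hρ hρ0 hpre hmem hown
        exact hstayj (ρ n) (hmem n le_rfl) hown _ (hσ _ _)
    · rintro s (hA | ⟨t, ht, rfl⟩)
      · exact hA'W hA
      · obtain ⟨σ', hσ', hw⟩ := ht
        refine G.mem_winRegion_switch j A' hA'W t.val (G.extendStrat A' σ')
          (G.extendStrat_isStrategy A' htot σ' hσ') ?_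
        intro ρ hρ hρ0 hcomp havoid
        obtain ⟨hπ, hπc⟩ := G.extendStrat_compat A' htot σ' j ρ havoid hρ hcomp
        exact hw _ hπ (Subtype.ext hρ0) hπc
  · apply Set.Subset.antisymm
    · intro s hs
      have hsA : s ∈ A'ᶜ := fun hA => G.winRegion_disjoint j s (hA'W hA) hs
      obtain ⟨σ, hσ, hw⟩ := hs
      refine ⟨⟨s, hsA⟩, ?_, rfl⟩
      refine G.mem_winRegion_restrict (1 - j) A' htot s hsA σ hσ hw ?_
      intro ρ n hρ hρ0 hpre hmem hown
      set t' := σ (List.ofFn fun i : Fin n => ρ i) (ρ n) with ht'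
      obtain ⟨ρ₂, hρ₂, hρ₂0⟩ := G.exists_play t'
      set ρt : ℕ → S := fun i => if i ≤ n then ρ i else ρ₂ (i - (n + 1)) with hρt
      have f1 : ∀ k, k ≤ n → ρt k = ρ k := by
        intro k hk; simp [hρt, hk]
      have f2 : ∀ m, ρt (n + 1 + m) = ρ₂ m := by
        intro m
        simp only [hρt, if_neg (by omega : ¬ n + 1 + m ≤ n)]
        congr 1
        omega
      have f3 : ρt (n + 1) = t' := by
        have := f2 0
        rw [Nat.add_zero] at this
        rw [this, hρ₂0]
      have hplay2 : G.IsPlay ρt := by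
        intro i
        rcases Nat.lt_or_ge i n with h | h
        · rw [f1 i h.le, f1 (i + 1) (by omega)]; exact hρ i
        · rcases Nat.eq_or_lt_of_le h with h' | h'
          · rw [← h', f1 n le_rfl, f3]
            exact hσ _ _
          · have e1 : ρt i = ρ₂ (i - (n + 1)) := by
              have := f2 (i - (n + 1)); rwa [show n + 1 + (i - (n + 1)) = i by omega] at this
            have e2 : ρt (i + 1) = ρ₂ (i - (n + 1) + 1) := by
              have := f2 (i - (n + 1) + 1)
              rwa [show n + 1 + (i - (n + 1) + 1) = i + 1 by omega] at this
            rw [e1, e2]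
            exact hρ₂ _
      have hpre2 : ∀ k < n + 1, G.owner (ρt k) = (1 - j) →
          ρt (k + 1) = σ (List.ofFn fun i : Fin k => ρt i) (ρt k) := by
        intro k hk hown'
        have hfe : (fun i : Fin k => ρt i) = fun i : Fin k => ρ i :=
          funext fun i => f1 i (by omega)
        rcases Nat.lt_or_ge k n with h | h
        · have hown2 : G.owner (ρ k) = 1 - j := by rw [← f1 k (by omega)]; exact hown'
          rw [f1 (k + 1) (by omega), hfe, f1 k (by omega)]
          exact hpre k h hown2
        · have hkn : k = n := by omega
          subst hkn
          rw [f3, hfe, f1 k le_rfl]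
      have hWt' : t' ∈ G.WinRegion (1 - j) := by
        have := G.mem_winRegion_of_prefix_compatible (1 - j) σ hσ s hw ρt hplay2
          (by rw [f1 0 (by omega)]; exact hρ0) (n + 1) hpre2
        rwa [f3] at this
      exact fun hA => G.winRegion_disjoint j t' (hA'W hA) hWt'
    · rintro s ⟨t, ht, rfl⟩
      refine G.extend_winning (1 - j) A' htot ?_ t ht
      intro u hu hown v hR
      have hj : G.owner u = j := by
        have hfin : ∀ a b : Fin 2, a ≠ 1 - b → a = b := by decide
        exact hfin _ j hown
      exact hstayj u hu hj v hR
end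

section
/- Let G be a parity game with colors in {1,...,d}, j ∈ {0,1} a player, G†_j its product game, and s a state of G. If (s, 0) ∈ W_j(G†_j), then s ∈ A_j(G). -/
open ParityGame


namespace ParityGame

variable {S : Type}

private theorem foldl_max_le' {l : List ℕ} {d : ℕ} :
    ∀ {a : ℕ}, a ≤ d → (∀ x ∈ l, x ≤ d) → l.foldl max a ≤ d := by
  induction l with
  | nil => intro a ha _; exact ha
  | cons x xs ih =>
    intro a ha hl
    exact ih (max_le ha (hl x (by simp))) fun y hy => hl y (List.mem_cons_of_mem _ hy)

/-- The max of the colors of the non-initial entries of a history. -/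
def vOf (G : ParityGame S) (l : List S) : ℕ := (l.tail.map G.c).foldl max 0

theorem vOf_le (G : ParityGame S) {d : ℕ} (hc : ∀ s, G.c s ≤ d) (l : List S) :
    vOf G l ≤ d := by
  refine foldl_max_le' (Nat.zero_le d) ?_
  intro x hx
  obtain ⟨t, -, rfl⟩ := List.mem_map.mp hx
  exact hc t

/-- `vOf` as an element of `Fin (d+1)`. -/
def vF (G : ParityGame S) (d : ℕ) (hc : ∀ s, G.c s ≤ d) (l : List S) : Fin (d + 1) :=
  ⟨vOf G l, Nat.lt_succ_of_le (vOf_le G hc l)⟩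

/-- The lift of a history of `G` to a history of the product game. -/
def pHist (G : ParityGame S) (d : ℕ) (hc : ∀ s, G.c s ≤ d) (l : List S) :
    List (S × Fin (d + 1)) :=
  List.ofFn fun k : Fin l.length => (l.get k, vF G d hc (l.take (k.val + 1)))

/-- The sequence of `v`-values along a play. -/
def vSeq (G : ParityGame S) (ρ : ℕ → S) : ℕ → ℕ
  | 0 => 0
  | i + 1 => max (vSeq G ρ i) (G.c (ρ (i + 1)))

theorem vOf_concat (G : ParityGame S) {l : List S} (hl : l ≠ []) (x : S) :
    vOf G (l.concat x) = max (vOf G l) (G.c x) := by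
  obtain ⟨a, l, rfl⟩ := List.exists_cons_of_ne_nil hl
  simp [vOf, List.concat_eq_append, List.foldl_append]

theorem vOf_ofFn (G : ParityGame S) (ρ : ℕ → S) :
    ∀ i, vOf G (List.ofFn fun k : Fin (i + 1) => ρ k.val) = vSeq G ρ i := by
  intro i
  induction i with
  | zero => simp [vOf, vSeq]
  | succ n ih =>
    rw [List.ofFn_succ' (fun k : Fin (n + 2) => ρ k.val)]
    have hcast : (fun i : Fin (n + 1) =>
        (fun k : Fin (n + 2) => ρ k.val) i.castSucc) = fun i : Fin (n + 1) => ρ i.val := by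
      funext i; simp
    rw [hcast]
    have hne : (List.ofFn fun k : Fin (n + 1) => ρ k.val) ≠ [] :=
      List.length_pos_iff.mp (by simp)
    rw [vOf_concat G hne, ih]
    simp [vSeq]

theorem take_ofFn_eq (ρ : ℕ → S) (i k : ℕ) (h : k < i) :
    (List.ofFn fun m : Fin i => ρ m.val).take (k + 1)
      = List.ofFn fun m : Fin (k + 1) => ρ m.val := by
  apply List.ext_getElem
  · simp; omega
  · intro n h1 h2
    simp only [List.getElem_take, List.getElem_ofFn]

theorem infOften_bound (π : ℕ → ℕ) (d e : ℕ) (hb : ∀ i, π i ≤ d)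
    (hmax : ∀ u, InfOften π u → u ≤ e) : ∃ M, ∀ i, M ≤ i → π i ≤ e := by
  classical
  have h : ∀ u : Fin (d + 1), ∃ n, InfOften π (u : ℕ) ∨ ∀ i, n ≤ i → π i ≠ (u : ℕ) := by
    intro u
    by_cases hu : InfOften π (u : ℕ)
    · exact ⟨0, Or.inl hu⟩
    · unfold InfOften at hu
      push_neg at hu
      obtain ⟨n, hn⟩ := hu
      exact ⟨n, Or.inr hn⟩
  choose f hf using h
  refine ⟨Finset.univ.sup f, fun i hi => ?_⟩
  have hlt : π i < d + 1 := Nat.lt_succ_of_le (hb i)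
  rcases hf ⟨π i, hlt⟩ with hu | hu
  · exact hmax _ hu
  · exact absurd rfl (hu i (le_trans (Finset.le_sup (Finset.mem_univ _)) hi))

end ParityGame

/-- If `(s, 0) ∈ W_j(G†_j)` in the product game `G†_j`, then
`s ∈ A_j(G)`. -/
theorem mem_winCore_of_mem_winRegion_prodGame {S : Type} [Fintype S] (G : ParityGame S)
    (j : Fin 2) (d : ℕ) (hc : ∀ s, 1 ≤ G.c s ∧ G.c s ≤ d) (s : S)
    (hs : ((s, (0 : Fin (d + 1))) : S × Fin (d + 1)) ∈
      (G.prodGame j d fun t => (hc t).2).WinRegion j) :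
    s ∈ G.WinCore j := by
  classical
  have hc' : ∀ t, G.c t ≤ d := fun t => (hc t).2
  obtain ⟨σ', hσ's, hσ'w⟩ := hs
  refine ⟨fun h t => (σ' (pHist G d hc' h) (t, vF G d hc' (h ++ [t]))).1, ?_, ?_⟩
  · intro h t
    exact (hσ's (pHist G d hc' h) (t, vF G d hc' (h ++ [t]))).1
  · intro ρ hplay h0 hcomp
    have hvs : ∀ i, vSeq G ρ (i + 1) = max (vSeq G ρ i) (G.c (ρ (i + 1))) := fun i => rfl
    have hvle : ∀ i, vSeq G ρ i ≤ d := by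
      intro i
      induction i with
      | zero => exact Nat.zero_le d
      | succ n ih => rw [hvs]; exact max_le ih (hc' _)
    let ρ' : ℕ → S × Fin (d + 1) := fun i => (ρ i, ⟨vSeq G ρ i, Nat.lt_succ_of_le (hvle i)⟩)
    have hconcat : ∀ i : ℕ, (List.ofFn fun k : Fin i => ρ k.val) ++ [ρ i]
        = List.ofFn fun k : Fin (i + 1) => ρ k.val := by
      intro i
      rw [List.ofFn_succ' (fun k : Fin (i + 1) => ρ k.val), List.concat_eq_append]
      simp
    have hvF : ∀ i, vF G d hc' ((List.ofFn fun k : Fin i => ρ k.val) ++ [ρ i]) = (ρ' i).2 := by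
      intro i
      apply Fin.ext
      show vOf G _ = vSeq G ρ i
      rw [hconcat i, vOf_ofFn]
    have hb : ∀ i : ℕ, pHist G d hc' (List.ofFn fun k : Fin i => ρ k.val)
        = List.ofFn fun k : Fin i => ρ' k.val := by
      intro i
      apply List.ext_getElem
      · simp [pHist]
      · intro n h1 h2
        have hn : n < i := by simpa [pHist] using h1
        simp only [pHist, List.getElem_ofFn]
        rw [take_ofFn_eq ρ i n hn]
        refine Prod.ext ?_ (Fin.ext ?_)
        · simp [List.get_ofFn]; rfl
        · show vOf G _ = vSeq G ρ n
          rw [vOf_ofFn]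
    have hplay' : (G.prodGame j d fun t => (hc t).2).IsPlay ρ' := fun i => ⟨hplay i, rfl⟩
    have h0' : ρ' 0 = (s, (0 : Fin (d + 1))) := by
      refine Prod.ext h0 (Fin.ext ?_)
      show vSeq G ρ 0 = ((0 : Fin (d + 1)) : ℕ)
      simp [vSeq]
    have hcomp' : (G.prodGame j d fun t => (hc t).2).Compatible j σ' ρ' := by
      intro i hown
      have h1 : ρ (i + 1) = (σ' (pHist G d hc' (List.ofFn fun k : Fin i => ρ k.val))
          (ρ i, vF G d hc' ((List.ofFn fun k : Fin i => ρ k.val) ++ [ρ i]))).1 := hcomp i hown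
      rw [hb i, hvF i] at h1
      have h2 : ρ (i + 1) = (σ' (List.ofFn fun k : Fin i => ρ' k.val) (ρ' i)).1 := h1
      have hR := hσ's (List.ofFn fun k : Fin i => ρ' k.val) (ρ' i)
      refine Prod.ext h2 (Fin.ext ?_)
      show vSeq G ρ (i + 1) = ((σ' (List.ofFn fun k : Fin i => ρ' k.val) (ρ' i)).2 : ℕ)
      rw [hR.2, ← h2]
      rfl
    have hΩ := hσ'w ρ' hplay' h0' hcomp'
    have hπ : ∀ i, (G.prodGame j d fun t => (hc t).2).colorSeq ρ' i
        = if vSeq G ρ i % 2 = (j : ℕ) then G.c (ρ i) else vSeq G ρ i := fun i => rfl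
    have hmono : Monotone (vSeq G ρ) := monotone_nat_of_le_succ fun n => by
      rw [hvs n]; exact le_max_left _ _
    obtain ⟨N, hN⟩ : ∃ N, ∀ i, vSeq G ρ i ≤ vSeq G ρ N := by
      have hmem : ∀ i, vSeq G ρ i ∈
          (Finset.range (d + 1)).filter (fun m => ∃ i, vSeq G ρ i = m) := fun i =>
        Finset.mem_filter.mpr ⟨Finset.mem_range.mpr (Nat.lt_succ_of_le (hvle i)), i, rfl⟩
      have hTne : ((Finset.range (d + 1)).filter (fun m => ∃ i, vSeq G ρ i = m)).Nonempty :=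
        ⟨_, hmem 0⟩
      obtain ⟨i0, hi0⟩ := (Finset.mem_filter.mp (Finset.max'_mem _ hTne)).2
      exact ⟨i0, fun i => hi0 ▸ Finset.le_max' _ _ (hmem i)⟩
    have hstab : ∀ i, N ≤ i → vSeq G ρ i = vSeq G ρ N := fun i hi =>
      le_antisymm (hN i) (hmono hi)
    obtain ⟨-, e, heinf, hemax, hepar⟩ := hΩ
    have hVj : vSeq G ρ N % 2 = (j : ℕ) := by
      by_contra hV
      obtain ⟨i, hi, hie⟩ := heinf N
      have hcol : (G.prodGame j d fun t => (hc t).2).colorSeq ρ' i = vSeq G ρ N := by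
        rw [hπ i, hstab i hi, if_neg hV]
      rw [hcol] at hie
      rw [← hie] at hepar
      exact hV hepar
    have hπc : ∀ i, N ≤ i → (G.prodGame j d fun t => (hc t).2).colorSeq ρ' i = G.c (ρ i) := by
      intro i hi
      rw [hπ i, if_pos]
      rw [hstab i hi]
      exact hVj
    have hπle : ∀ i, (G.prodGame j d fun t => (hc t).2).colorSeq ρ' i ≤ d := by
      intro i
      rw [hπ i]
      split
      · exact hc' _
      · exact hvle i
    obtain ⟨M0, hM0⟩ := infOften_bound _ d e hπle hemax
    have hNM : N ≤ max M0 N := le_max_right _ _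
    have hMe : ∀ i, max M0 N ≤ i → G.c (ρ i) ≤ e := by
      intro i hi
      rw [← hπc i (le_trans hNM hi)]
      exact hM0 i (le_trans (le_max_left _ _) hi)
    have hocc : ∀ n, ∃ i, n ≤ i ∧ G.c (ρ i) = e := by
      intro n
      obtain ⟨i, hi, hie⟩ := heinf (max n (max M0 N))
      refine ⟨i, le_trans (le_max_left _ _) hi, ?_⟩
      rw [← hπc i (le_trans (le_trans hNM (le_max_right n _)) hi)]
      exact hie
    let step : ℕ → ℕ := fun m => Classical.choose (hocc (max (m + 1) (max M0 N)))
    have hstep : ∀ m, max (m + 1) (max M0 N) ≤ step m ∧ G.c (ρ (step m)) = e :=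
      fun m => Classical.choose_spec (hocc (max (m + 1) (max M0 N)))
    let idx : ℕ → ℕ := fun k => Nat.rec 0 (fun _ m => step m) k
    have hidxs : ∀ k, idx (k + 1) = step (idx k) := fun k => rfl
    have hlt : ∀ k, idx k < idx (k + 1) := by
      intro k
      rw [hidxs]
      exact lt_of_lt_of_le (Nat.lt_succ_self _) (le_trans (le_max_left _ _) (hstep (idx k)).1)
    have hMidx : ∀ k, max M0 N ≤ idx (k + 1) := by
      intro k
      rw [hidxs]
      exact le_trans (le_max_right _ _) (hstep _).1
    have hNidx : ∀ k, N ≤ idx (k + 1) := fun k => le_trans hNM (hMidx k)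
    have hce : ∀ k, G.c (ρ (idx (k + 1))) = e := by
      intro k
      rw [hidxs]
      exact (hstep _).2
    have hsup : ∀ i, ((Finset.Icc 1 i).sup fun k => G.c (ρ k)) = vSeq G ρ i := by
      intro i
      induction i with
      | zero => simp [vSeq]
      | succ n ih =>
        have hins : Finset.Icc 1 (n + 1) = insert (n + 1) (Finset.Icc 1 n) := by
          ext k; simp; omega
        rw [hins, Finset.sup_insert, ih]
        show max (G.c (ρ (n + 1))) (vSeq G ρ n) = vSeq G ρ (n + 1)
        rw [hvs n, max_comm]
    refine ⟨idx, rfl, ?_⟩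
    intro ℓ
    refine ⟨hlt ℓ, ?_⟩
    match ℓ with
    | 0 =>
      show ((Finset.Icc (idx 0 + 1) (idx 1)).sup fun k => G.c (ρ k)) % 2 = (j : ℕ)
      have h01 : idx 0 + 1 = 1 := rfl
      rw [h01, hsup (idx 1), hstab (idx 1) (hNidx 0)]
      exact hVj
    | (ℓ + 1) =>
      show ((Finset.Icc (idx (ℓ + 1) + 1) (idx (ℓ + 2))).sup fun k => G.c (ρ k)) % 2 = (j : ℕ)
      have hsup2 : ((Finset.Icc (idx (ℓ + 1) + 1) (idx (ℓ + 2))).sup fun k => G.c (ρ k)) = e := by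
        apply le_antisymm
        · refine Finset.sup_le fun k hk => ?_
          have hk1 := (Finset.mem_Icc.mp hk).1
          exact hMe k (le_trans (le_trans (hMidx ℓ) (Nat.le_succ _)) hk1)
        · have hbmem : idx (ℓ + 2) ∈ Finset.Icc (idx (ℓ + 1) + 1) (idx (ℓ + 2)) :=
            Finset.mem_Icc.mpr ⟨hlt (ℓ + 1), le_refl _⟩
          calc e = G.c (ρ (idx (ℓ + 2))) := (hce (ℓ + 1)).symm
            _ ≤ _ := Finset.le_sup (f := fun k => G.c (ρ k)) hbmem
      rw [hsup2]
      exact hepar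
end

section
/- Let G be a parity game and j ∈ {0,1} a player. Then B_j(G) ⊆ A_j(G): the limit of the decreasing sequence B^i_j(G) is contained in the winning core of player j. -/
open ParityGame

section AuxForStatement15

open ParityGame

variable {S : Type}

/-- A default strategy given by totality. -/
noncomputable def defStrat (G : ParityGame S) : List S → S → S := fun _ s => (G.total s).choose

lemma defStrat_isStrategy (G : ParityGame S) : G.IsStrategy (defStrat G) :=
  fun _ s => (G.total s).choose_spec

open Classical in
/-- The last "reset point" in the prefix `ρ 0, ..., ρ n`: the largest index at which a
new `j`-dominating segment ending in `B` was completed. -/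
noncomputable def lastReset (G : ParityGame S) (j : Fin 2) (B : Set S) (ρ : ℕ → S) : ℕ → ℕ
  | 0 => 0
  | n + 1 =>
    if G.SegDom j ρ (lastReset G j B ρ n) (n + 1) ∧ ρ (n + 1) ∈ B then n + 1
    else lastReset G j B ρ n

open Classical in
lemma lastReset_succ (G : ParityGame S) (j : Fin 2) (B : Set S) (ρ : ℕ → S) (n : ℕ) :
    lastReset G j B ρ (n + 1) =
      if G.SegDom j ρ (lastReset G j B ρ n) (n + 1) ∧ ρ (n + 1) ∈ B then n + 1
      else lastReset G j B ρ n := rfl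

lemma lastReset_le (G : ParityGame S) (j : Fin 2) (B : Set S) (ρ : ℕ → S) (n : ℕ) :
    lastReset G j B ρ n ≤ n := by
  induction n with
  | zero => exact le_rfl
  | succ n ih =>
    rw [lastReset_succ]
    split
    · exact le_rfl
    · exact ih.trans (Nat.le_succ n)

lemma segDom_congr (G : ParityGame S) (j : Fin 2) {ρ ρ' : ℕ → S} {a b : ℕ}
    (h : ∀ k, k ≤ b → ρ k = ρ' k) : G.SegDom j ρ a b ↔ G.SegDom j ρ' a b := by
  unfold ParityGame.SegDom
  have hs : ((Finset.Icc (a + 1) b).sup fun k => G.c (ρ k))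
      = (Finset.Icc (a + 1) b).sup fun k => G.c (ρ' k) :=
    Finset.sup_congr rfl fun k hk => by rw [h k (Finset.mem_Icc.mp hk).2]
  rw [hs]

lemma lastReset_congr (G : ParityGame S) (j : Fin 2) (B : Set S) {ρ ρ' : ℕ → S} {n : ℕ}
    (h : ∀ k, k ≤ n → ρ k = ρ' k) : lastReset G j B ρ n = lastReset G j B ρ' n := by
  induction n with
  | zero => rfl
  | succ n ih =>
    have ih' := ih fun k hk => h k (hk.trans (Nat.le_succ n))
    rw [lastReset_succ, lastReset_succ, ih']
    have hseg := segDom_congr G j (a := lastReset G j B ρ' n) (b := n + 1) h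
    have hmem : (ρ (n + 1) ∈ B) ↔ (ρ' (n + 1) ∈ B) := by rw [h (n + 1) le_rfl]
    classical
    exact if_congr (and_congr hseg hmem) rfl rfl

lemma segDom_shift (G : ParityGame S) (j : Fin 2) (ρ : ℕ → S) (m a b : ℕ) :
    G.SegDom j (fun i => ρ (m + i)) a b ↔ G.SegDom j ρ (m + a) (m + b) := by
  have himg : Finset.Icc (m + a + 1) (m + b)
      = Finset.image (m + ·) (Finset.Icc (a + 1) b) := by
    rw [Finset.image_add_left_Icc, Nat.add_assoc]
  unfold ParityGame.SegDom
  rw [himg, Finset.sup_image]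
  have hco : ((fun k => G.c (ρ k)) ∘ fun x => m + x) = fun k => G.c (ρ (m + k)) := rfl
  rw [hco]
  exact and_congr (Nat.add_lt_add_iff_left).symm Iff.rfl

/-- The combined strategy: find the last reset point `m` in the history, and play
the strategy `F (ρ m)` of the state at the last reset point, fed with the history
since that point. -/
noncomputable def combStrat (G : ParityGame S) (j : Fin 2) (B : Set S)
    (F : S → List S → S → S) : List S → S → S := fun h s =>
  let ρ : ℕ → S := fun i => (h ++ [s]).getD i s
  let m := lastReset G j B ρ h.length
  F (ρ m) (List.ofFn fun k : Fin (h.length - m) => ρ (m + k.val)) s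

lemma combStrat_isStrategy (G : ParityGame S) (j : Fin 2) (B : Set S)
    (F : S → List S → S → S) (hF : ∀ t, G.IsStrategy (F t)) :
    G.IsStrategy (combStrat G j B F) := fun _h s => hF _ _ s

lemma combStrat_spec (G : ParityGame S) (j : Fin 2) (B : Set S) (F : S → List S → S → S)
    (ρ : ℕ → S) (i : ℕ) :
    combStrat G j B F (List.ofFn fun k : Fin i => ρ k.val) (ρ i) =
      F (ρ (lastReset G j B ρ i))
        (List.ofFn fun k : Fin (i - lastReset G j B ρ i) =>
          ρ (lastReset G j B ρ i + k.val))
        (ρ i) := by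
  have hcat : (List.ofFn fun k : Fin i => ρ k.val) ++ [ρ i]
      = List.ofFn (fun k : Fin (i + 1) => ρ k.val) := by
    rw [List.ofFn_succ']
    simp [List.concat_eq_append]
  have hlen : (List.ofFn fun k : Fin i => ρ k.val).length = i := by simp
  set rr : ℕ → S := fun k => ((List.ofFn fun k : Fin i => ρ k.val) ++ [ρ i]).getD k (ρ i)
    with hrr
  have hagree : ∀ k, k ≤ i → rr k = ρ k := by
    intro k hk
    show ((List.ofFn fun k : Fin i => ρ k.val) ++ [ρ i]).getD k (ρ i) = ρ k
    rw [hcat, List.getD_eq_getElem _ _ (by simpa using Nat.lt_succ_of_le hk),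
      List.getElem_ofFn]
  show F (rr (lastReset G j B rr (List.ofFn fun k : Fin i => ρ k.val).length))
      (List.ofFn fun k : Fin ((List.ofFn fun k : Fin i => ρ k.val).length
          - lastReset G j B rr (List.ofFn fun k : Fin i => ρ k.val).length) =>
        rr (lastReset G j B rr (List.ofFn fun k : Fin i => ρ k.val).length + k.val)) (ρ i)
    = _
  rw [hlen]
  have hm : lastReset G j B rr i = lastReset G j B ρ i :=
    lastReset_congr G j B fun k hk => hagree k hk
  rw [hm]
  have hle := lastReset_le G j B ρ i
  have e1 : rr (lastReset G j B ρ i) = ρ (lastReset G j B ρ i) := hagree _ hle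
  have e2 : (List.ofFn fun k : Fin (i - lastReset G j B ρ i) =>
        rr (lastReset G j B ρ i + k.val))
      = List.ofFn fun k : Fin (i - lastReset G j B ρ i) =>
        ρ (lastReset G j B ρ i + k.val) := by
    refine congrArg List.ofFn (funext fun k => ?_)
    exact hagree _ (by have := k.isLt; omega)
  rw [e1, e2]

lemma lastReset_stay (G : ParityGame S) (j : Fin 2) (B : Set S) (ρ : ℕ → S)
    {m n : ℕ} (hm : lastReset G j B ρ m = m) (hmn : m ≤ n)
    (hno : ∀ k, m < k → k ≤ n → lastReset G j B ρ k ≠ k) :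
    lastReset G j B ρ n = m := by
  induction n with
  | zero =>
    have : m = 0 := Nat.le_zero.mp hmn
    rw [← this]; exact hm
  | succ n ih =>
    rcases Nat.lt_or_ge n m with h | h
    · have : m = n + 1 := by omega
      rw [← this]; exact hm
    · have hn : lastReset G j B ρ n = m :=
        ih h (fun k hk1 hk2 => hno k hk1 (hk2.trans (Nat.le_succ n)))
      rw [lastReset_succ]
      split
      · rename_i hc
        exfalso
        exact hno (n + 1) (by omega) le_rfl (by rw [lastReset_succ, if_pos hc])
      · exact hn

lemma reset_step (G : ParityGame S) (j : Fin 2) (B : Set S) (ρ : ℕ → S) {n : ℕ}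
    (h : lastReset G j B ρ (n + 1) = n + 1) :
    G.SegDom j ρ (lastReset G j B ρ n) (n + 1) ∧ ρ (n + 1) ∈ B := by
  by_contra hc
  rw [lastReset_succ, if_neg hc] at h
  have := lastReset_le G j B ρ n
  omega

lemma progress (G : ParityGame S) (j : Fin 2) (B : Set S) (F : S → List S → S → S)
    (hF : ∀ t ∈ B, G.IsStrategy (F t) ∧ ∀ ρ, G.IsPlay ρ → ρ 0 = t →
        G.Compatible j (F t) ρ → ∃ k, G.SegDom j ρ 0 k ∧ ρ k ∈ B)
    (ρ : ℕ → S) (hplay : G.IsPlay ρ) (hcomp : G.Compatible j (combStrat G j B F) ρ)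
    {m : ℕ} (hm : lastReset G j B ρ m = m) (hmB : ρ m ∈ B) :
    ∃ n, m < n ∧ lastReset G j B ρ n = n ∧ ρ n ∈ B ∧ G.SegDom j ρ m n := by
  classical
  by_cases hex : ∃ n, m < n ∧ lastReset G j B ρ n = n
  · obtain ⟨hlt, hreset⟩ := Nat.find_spec hex
    obtain ⟨n', hn'⟩ : ∃ n', Nat.find hex = n' + 1 := ⟨Nat.find hex - 1, by omega⟩
    rw [hn'] at hlt hreset
    have hstay : lastReset G j B ρ n' = m :=
      lastReset_stay G j B ρ hm (by omega)
        (fun k hk1 hk2 hk3 => Nat.find_min hex (by omega) ⟨hk1, hk3⟩)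
    have hcond := reset_step G j B ρ hreset
    rw [hstay] at hcond
    exact ⟨n' + 1, hlt, hreset, hcond.2, hcond.1⟩
  · push_neg at hex
    have hstay : ∀ n, m ≤ n → lastReset G j B ρ n = m := fun n hn =>
      lastReset_stay G j B ρ hm hn (fun k hk1 _ => hex k hk1)
    have hplay' : G.IsPlay (fun i => ρ (m + i)) := fun i => hplay (m + i)
    have h0 : (fun i => ρ (m + i)) 0 = ρ m := by simp
    obtain ⟨hFstrat, hFspec⟩ := hF (ρ m) hmB
    have hcomp' : G.Compatible j (F (ρ m)) (fun i => ρ (m + i)) := by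
      intro i hown
      have hc := hcomp (m + i) hown
      rw [combStrat_spec] at hc
      rw [hstay (m + i) (by omega)] at hc
      rw [Nat.add_sub_cancel_left] at hc
      exact hc
    obtain ⟨k, hkdom, hkB⟩ := hFspec (fun i => ρ (m + i)) hplay' h0 hcomp'
    have hk0 : 0 < k := hkdom.1
    have hdom : G.SegDom j ρ m (m + k) := by
      have := (segDom_shift G j ρ m 0 k).mp hkdom
      simpa using this
    exfalso
    have h1 : lastReset G j B ρ (m + k) = m := hstay _ (by omega)
    obtain ⟨k', rfl⟩ : ∃ k', k = k' + 1 := ⟨k - 1, by omega⟩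
    have h2 : lastReset G j B ρ (m + k') = m := hstay _ (by omega)
    rw [Nat.add_succ] at h1
    have hkB' : ρ (m + k' + 1) ∈ B := hkB
    have hdom' : G.SegDom j ρ m (m + k' + 1) := hdom
    rw [lastReset_succ, h2, if_pos ⟨hdom', hkB'⟩] at h1
    omega

lemma core_aux (G : ParityGame S) (j : Fin 2) (B : Set S)
    (hB : ∀ t ∈ B, ∃ σ, G.IsStrategy σ ∧ ∀ ρ, G.IsPlay ρ → ρ 0 = t →
      G.Compatible j σ ρ → ∃ k, G.SegDom j ρ 0 k ∧ ρ k ∈ B) :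
    B ⊆ G.WinCore j := by
  classical
  have hF : ∀ t, ∃ σ, G.IsStrategy σ ∧ (t ∈ B → ∀ ρ, G.IsPlay ρ → ρ 0 = t →
      G.Compatible j σ ρ → ∃ k, G.SegDom j ρ 0 k ∧ ρ k ∈ B) := by
    intro t
    by_cases ht : t ∈ B
    · obtain ⟨σ, h1, h2⟩ := hB t ht
      exact ⟨σ, h1, fun _ => h2⟩
    · exact ⟨defStrat G, defStrat_isStrategy G, fun h => absurd h ht⟩
  choose F hFstrat hFspec using hF
  intro s hs
  refine ⟨combStrat G j B F, combStrat_isStrategy G j B F hFstrat, ?_⟩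
  intro ρ hplay h0 hcomp
  have hprog : ∀ m, lastReset G j B ρ m = m → ρ m ∈ B →
      ∃ n, m < n ∧ lastReset G j B ρ n = n ∧ ρ n ∈ B ∧ G.SegDom j ρ m n :=
    fun m hm hmB =>
      progress G j B F (fun t ht => ⟨hFstrat t, hFspec t ht⟩) ρ hplay hcomp hm hmB
  let Q : ℕ → Prop := fun n => lastReset G j B ρ n = n ∧ ρ n ∈ B
  have hQ0 : Q 0 := ⟨rfl, h0.symm ▸ hs⟩
  have hstep : ∀ n, Q n → ∃ n', (G.SegDom j ρ n n') ∧ Q n' := by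
    rintro n ⟨h1, h2⟩
    obtain ⟨n', _, b, c, d⟩ := hprog n h1 h2
    exact ⟨n', d, b, c⟩
  let f : ℕ → {n // Q n} := fun ℓ =>
    Nat.rec ⟨0, hQ0⟩ (fun _ p => ⟨(hstep p.1 p.2).choose, (hstep p.1 p.2).choose_spec.2⟩) ℓ
  refine ⟨fun ℓ => (f ℓ).1, rfl, fun ℓ => ?_⟩
  exact (hstep (f ℓ).1 (f ℓ).2).choose_spec.1

end AuxForStatement15

/-- The limit `B_j(G)` of the decreasing sequence `B^i_j(G)`
(its intersection) is contained in the winning core: `B_j(G) ⊆ A_j(G)`. -/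
theorem bsetLimit_subset_winCore {S : Type} [Fintype S] (G : ParityGame S) (j : Fin 2) :
    (⋂ i, G.Bset j i) ⊆ G.WinCore j := by
  classical
  have hmono : ∀ i, G.Bset j (i+1) ⊆ G.Bset j i := fun i s hs => hs.1
  have hstab : ∃ n, G.Bset j (n+1) = G.Bset j n := by
    by_contra hc
    push_neg at hc
    have hcard : ∀ n, (G.Bset j (n+1)).ncard < (G.Bset j n).ncard := fun n =>
      Set.ncard_lt_ncard ((hmono n).ssubset_of_ne (hc n)) (Set.toFinite _)
    have hb : ∀ n, (G.Bset j n).ncard + n ≤ (G.Bset j 0).ncard := by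
      intro n
      induction n with
      | zero => simp
      | succ n ih => have := hcard n; omega
    have := hb ((G.Bset j 0).ncard + 1)
    omega
  obtain ⟨n, hn⟩ := hstab
  have hsub : (⋂ i, G.Bset j i) ⊆ G.Bset j n := fun s hs => Set.mem_iInter.mp hs n
  refine hsub.trans (core_aux G j (G.Bset j n) ?_)
  intro t ht
  have ht' : t ∈ G.Bset j (n+1) := hn.symm ▸ ht
  obtain ⟨-, σ, h1, h2⟩ := ht'
  exact ⟨σ, h1, h2⟩
end
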